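/- arXiv:1012.3898 — 6 statements merged into one kernel-verified Lean document; each statement's English description precedes it below -/
import Mathlib

section
/- Let p > 3 be a prime and let t be a nonzero element of ℤ/pℤ. Then in ℤ/pℤ the following four quantities are all equal: (1) P_{⌊p/4⌋}(2/t − 1); (2) Σ_{k=0}^{⌊p/4⌋} C(4k,2k)·C(2k,k)·((t−1)/(64t))^k; (3) (−1)^{⌊p/4⌋}·Σ_{k=0}^{⌊p/4⌋} C(4k,2k)·C(2k,k)·(64t)^{−k}; (4) −(−6t)^{(p−1)/2}·Σ_{x ∈ ℤ/pℤ} (t·x³ − 3(t+3)·x + 2(t−9))^{(p−1)/2}. Moreover, if s ∈ ℤ/pℤ satisfies s² = t, then this common value equals s^{(p−1)/2}·P_{(p−1)/2}(s). -/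
/-- The Legendre polynomial `P_n` evaluated at `x`, in any commutative ring
(meaningful when 2 is invertible):
`P_n(x) = 2^{-n} * Σ_{k=0}^{⌊n/2⌋} (-1)^k C(n,k) C(2n-2k,n) x^{n-2k}`. -/
noncomputable def legP {R : Type*} [CommRing R] (n : ℕ) (x : R) : R :=
  Ring.inverse (2 : R) ^ n *
    ∑ k ∈ Finset.range (n / 2 + 1),
      (-1 : R) ^ k * (n.choose k : R) * (((2 * n - 2 * k).choose n : ℕ) : R) * x ^ (n - 2 * k)

/-!
Write `n = ⌊p/4⌋` and `m = (p-1)/2`. Comparing the coefficient of `X^n` in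
`((X + x)² - 1)^n = ((X + x - 1)(X + x - 1 + 2))^n` expanded in two ways gives
`P_n(2v - 1) = ∑ C(n,k) C(n+k,k) (v-1)^k`, and `P_n(-x) = (-1)^n P_n(x)`.
Modulo `p` (where `p ∈ {4n+1, 4n+3}` and `p = 2m+1`), the three sequences `C(4k,2k) C(2k,k)`,
`(-64)^k C(n,k) C(n+k,k)` and `(-64)^k C(m,2k) C(m,k)` satisfy the same recurrence
`(k+1)² u_{k+1} = 4 (4k+1)(4k+3) u_k` with `u_0 = 1`, so they agree for `k ≤ n`.
This gives (1) and (2) and writes the common value as `(-1)^n t^m S(t)`, where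
`S(t) = ∑ (-1)^k C(m,2k) C(m,k) t^(m-k)` is the coefficient of `z^(p-1)` in
`((z+1)(t z² - 1))^m`.
The substitution `x = 3z + 1` turns the cubic into `27 (z+1)(t z² - 1)`, and a character sum
`∑_z f(z)` over `𝔽_p` with `deg f < 2(p-1)` is minus the coefficient of `z^(p-1)`: this is (3).
For (4), `C(2m-2k, m) ≡ (-1)^m C(m,2k)` turns `s^m P_m(s)` into `(-1)^n S(s²)`. All signs are
matched by `(-2)^m = (-1)^n`, the supplementary law for `(-2/p)`.
-/

open Polynomial Finset

section Legendre

variable {R : Type*} [CommRing R]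

theorem Polynomial.coeff_X_add_C_sq_sub_one_pow (x : R) (n : ℕ) :
    (((X + C x) ^ 2 - 1) ^ n).coeff n = ∑ k ∈ range (n + 1),
      (-1 : R) ^ k * (n.choose k : R) * (((2 * n - 2 * k).choose n : ℕ) : R) *
        x ^ (n - 2 * k) := by
  rw [sub_eq_neg_add, add_pow, finsetSum_coeff]
  refine sum_congr rfl fun k hk => ?_
  have hk : k ≤ n := Nat.lt_succ_iff.mp (mem_range.mp hk)
  have hterm : (-1 : R[X]) ^ k * ((X + C x) ^ 2) ^ (n - k) * (n.choose k : R[X]) =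
      (X + C x) ^ (2 * n - 2 * k) * C ((-1) ^ k * (n.choose k : R)) := by
    rw [C_mul, C_pow, C_neg, C_1, map_natCast, ← pow_mul,
      show 2 * (n - k) = 2 * n - 2 * k by omega]
    ring
  rw [hterm, coeff_mul_C, coeff_X_add_C_pow, show 2 * n - 2 * k - n = n - 2 * k by omega]
  ring

theorem Polynomial.coeff_X_add_C_mul_add_two_pow (z : R) (n : ℕ) :
    (((X + C z) * (X + C z + 2)) ^ n).coeff n =
      ∑ k ∈ range (n + 1), (n.choose k : R) * ((n + k).choose n : R) * z ^ k * 2 ^ (n - k) := by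
  rw [mul_pow, add_pow (X + C z) 2, mul_sum, finsetSum_coeff]
  refine sum_congr rfl fun k _ => ?_
  have hterm : (X + C z) ^ n * ((X + C z) ^ k * 2 ^ (n - k) * (n.choose k : R[X])) =
      (X + C z) ^ (n + k) * C (2 ^ (n - k) * (n.choose k : R)) := by
    rw [C_mul, C_pow, map_ofNat, map_natCast]
    ring
  rw [hterm, coeff_mul_C, coeff_X_add_C_pow, Nat.add_sub_cancel_left]
  ring

theorem legP_eq_sum_range (n : ℕ) (x : R) :
    legP n x = Ring.inverse (2 : R) ^ n * ∑ k ∈ range (n + 1),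
      (-1 : R) ^ k * (n.choose k : R) * (((2 * n - 2 * k).choose n : ℕ) : R) *
        x ^ (n - 2 * k) := by
  rw [legP]
  congr 1
  refine sum_subset (range_subset_range.mpr (by omega)) fun k hk hk' => ?_
  rw [mem_range] at hk hk'
  rw [Nat.choose_eq_zero_of_lt (show 2 * n - 2 * k < n by omega)]
  simp

theorem legP_neg (n : ℕ) (y : R) : legP n (-y) = (-1) ^ n * legP n y := by
  rw [legP, legP, mul_left_comm ((-1 : R) ^ n)]
  congr 1
  rw [mul_sum]
  refine sum_congr rfl fun k hk => ?_
  have h2k : 2 * k ≤ n := by rw [mem_range] at hk; omega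
  have hsign : (-1 : R) ^ n = (-1) ^ (n - 2 * k) := by
    conv_lhs => rw [← Nat.sub_add_cancel h2k]
    rw [pow_add, pow_mul, neg_one_sq, one_pow, mul_one]
  rw [neg_pow y, hsign]
  ring

theorem two_pow_mul_legP (h2 : IsUnit (2 : R)) (n : ℕ) (x : R) :
    2 ^ n * legP n x = ∑ k ∈ range (n + 1),
      (n.choose k : R) * ((n + k).choose n : R) * (x - 1) ^ k * 2 ^ (n - k) := by
  have hfactor : (X + C x) ^ 2 - 1 = (X + C (x - 1)) * (X + C (x - 1) + 2) := by
    rw [C_sub, C_1]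
    ring
  rw [legP_eq_sum_range, ← mul_assoc, ← mul_pow, Ring.mul_inverse_cancel _ h2, one_pow, one_mul,
    ← Polynomial.coeff_X_add_C_sq_sub_one_pow, hfactor, Polynomial.coeff_X_add_C_mul_add_two_pow]

theorem legP_two_mul_sub_one (h2 : IsUnit (2 : R)) (n : ℕ) (v : R) :
    legP n (2 * v - 1) =
      ∑ k ∈ range (n + 1), (n.choose k : R) * ((n + k).choose n : R) * (v - 1) ^ k := by
  refine (h2.pow n).mul_left_cancel ?_
  rw [two_pow_mul_legP h2, mul_sum]
  refine sum_congr rfl fun k hk => ?_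
  have hsplit : (2 : R) ^ n = 2 ^ k * 2 ^ (n - k) := by
    rw [← pow_add, Nat.add_sub_cancel' (Nat.lt_succ_iff.mp (mem_range.mp hk))]
  rw [show 2 * v - 1 - 1 = 2 * (v - 1) by ring, mul_pow, hsplit]
  ring

theorem legP_two_mul_sub_one_eq_neg_one_pow_mul (h2 : IsUnit (2 : R)) (n : ℕ) (v : R) :
    legP n (2 * v - 1) =
      (-1) ^ n * ∑ k ∈ range (n + 1), (n.choose k : R) * ((n + k).choose n : R) * (-v) ^ k := by
  rw [show 2 * v - 1 = -(2 * (1 - v) - 1) by ring, legP_neg, legP_two_mul_sub_one h2]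
  simp_rw [sub_sub_cancel_left]

def binomSum (m : ℕ) (t : R) : R :=
  ∑ k ∈ range (m / 2 + 1), (-1) ^ k * (m.choose (2 * k) : R) * (m.choose k : R) * t ^ (m - k)

theorem Polynomial.coeff_pow_eq_binomSum (m : ℕ) (t : R) :
    (((X + 1) * (C t * X ^ 2 - 1)) ^ m).coeff (2 * m) = binomSum m t := by
  rw [binomSum, sum_subset (range_subset_range.mpr (by omega : m / 2 + 1 ≤ m + 1)), mul_pow,
    sub_eq_neg_add, add_pow (-1 : R[X]), mul_sum, finsetSum_coeff]
  · refine sum_congr rfl fun k hk => ?_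
    have hk : k ≤ m := Nat.lt_succ_iff.mp (mem_range.mp hk)
    have hterm : (X + 1) ^ m * ((-1) ^ k * (C t * X ^ 2) ^ (m - k) * (m.choose k : R[X])) =
        (X + 1) ^ m * X ^ (2 * (m - k)) * C ((-1) ^ k * t ^ (m - k) * (m.choose k : R)) := by
      rw [C_mul, C_mul, C_pow, C_pow, C_neg, C_1, map_natCast, pow_mul]
      ring
    rw [hterm, coeff_mul_C, coeff_mul_X_pow', if_pos (by omega),
      show 2 * m - 2 * (m - k) = 2 * k by omega, coeff_X_add_one_pow]
    ring
  · intro k hk hk'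
    rw [mem_range] at hk hk'
    rw [Nat.choose_eq_zero_of_lt (show m < 2 * k by omega)]
    simp

end Legendre

section FiniteField

variable {K : Type*} [Field K] [Fintype K]

theorem FiniteField.sum_pow_eq_ite_of_lt_two_mul {i : ℕ} (hi : i < 2 * (Fintype.card K - 1)) :
    ∑ x : K, x ^ i = if i = Fintype.card K - 1 then -1 else 0 := by
  classical
  rcases Nat.lt_or_ge i (Fintype.card K - 1) with hlt | hge
  · rw [if_neg hlt.ne, FiniteField.sum_pow_lt_card_sub_one K i hlt]
  have hq : 1 < Fintype.card K := Fintype.one_lt_card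
  have hunits : ∑ x : K, x ^ i = ∑ x : Kˣ, (x : K) ^ i := by
    rw [Fintype.sum_eq_add_sum_subtype_ne _ 0, zero_pow (by omega), zero_add,
      ← unitsEquivNeZero.sum_comp]
    rfl
  have hdvd : Fintype.card K - 1 ∣ i ↔ i = Fintype.card K - 1 := by
    refine ⟨fun ⟨c, hc⟩ => ?_, fun h => h ▸ dvd_rfl⟩
    have : c < 2 := by nlinarith
    interval_cases c <;> omega
  rw [hunits, FiniteField.sum_pow_units]
  exact if_congr hdvd rfl rfl

theorem Polynomial.sum_eval_eq_neg_coeff {f : K[X]}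
    (hf : f.natDegree < 2 * (Fintype.card K - 1)) :
    ∑ x : K, f.eval x = -f.coeff (Fintype.card K - 1) := by
  have hq : 1 < Fintype.card K := Fintype.one_lt_card
  calc ∑ x : K, f.eval x
      = ∑ i ∈ range (2 * (Fintype.card K - 1)), f.coeff i * ∑ x : K, x ^ i := by
        simp_rw [eval_eq_sum_range' hf, mul_sum]
        exact sum_comm
    _ = ∑ i ∈ range (2 * (Fintype.card K - 1)),
          f.coeff i * if i = Fintype.card K - 1 then -1 else 0 :=
        sum_congr rfl fun i hi => by
          rw [FiniteField.sum_pow_eq_ite_of_lt_two_mul (mem_range.mp hi)]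
    _ = -f.coeff (Fintype.card K - 1) := by
        simp [mul_ite, sum_ite_eq', hq]

end FiniteField

theorem Nat.succ_sq_mul_centralBinom_two_mul_mul_centralBinom (k : ℕ) :
    (k + 1) ^ 2 * ((2 * (k + 1)).centralBinom * (k + 1).centralBinom) =
      4 * (4 * k + 1) * (4 * k + 3) * ((2 * k).centralBinom * k.centralBinom) := by
  have h1 := Nat.succ_mul_centralBinom_succ (2 * k)
  have h2 := Nat.succ_mul_centralBinom_succ (2 * k + 1)
  have h3 := Nat.succ_mul_centralBinom_succ k
  rw [show 2 * (k + 1) = 2 * k + 1 + 1 by ring]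
  zify at h1 h2 h3 ⊢
  refine mul_left_cancel₀ (show (2 * (2 * k + 1) : ℤ) ≠ 0 by positivity) ?_
  linear_combination ((2 * k + 1) * (k + 1) * ((k + 1).centralBinom : ℤ)) * h2
    + (2 * (4 * k + 3) * (k + 1) * ((k + 1).centralBinom : ℤ)) * h1
    + (4 * (4 * k + 1) * (4 * k + 3) * ((2 * k).centralBinom : ℤ)) * h3

theorem Nat.succ_mul_add_two_mul_choose_add_two (n j : ℕ) :
    (j + 1) * (j + 2) * n.choose (j + 2) = (n - j) * (n - j - 1) * n.choose j := by
  have g1 := Nat.choose_succ_right_eq n j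
  have g2 := Nat.choose_succ_right_eq n (j + 1)
  rw [Nat.sub_sub]
  calc (j + 1) * (j + 2) * n.choose (j + 2)
        = (j + 1) * (n.choose (j + 1 + 1) * (j + 1 + 1)) := by ring
    _ = n.choose (j + 1) * (j + 1) * (n - (j + 1)) := by rw [g2]; ring
    _ = (n - j) * (n - (j + 1)) * n.choose j := by rw [g1]; ring

theorem Nat.succ_mul_add_two_mul_choose (n k : ℕ) :
    (n + 1) * (n + 2) * n.choose k = (n + 1 - k) * (n + 2 - k) * (n + 2).choose k := by
  have f1 := Nat.choose_mul_succ_eq n k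
  have f2 := Nat.choose_mul_succ_eq (n + 1) k
  calc (n + 1) * (n + 2) * n.choose k = n.choose k * (n + 1) * (n + 1 + 1) := by ring
    _ = (n + 1 - k) * ((n + 1).choose k * (n + 1 + 1)) := by rw [f1]; ring
    _ = (n + 1 - k) * (n + 2 - k) * (n + 2).choose k := by rw [f2]; ring

theorem eq_pow_mul_of_recurrence {M : Type*} [CommMonoidWithZero M] [IsLeftCancelMulZero M]
    {x y d e : ℕ → M} {c : M} {N : ℕ} (h0 : x 0 = y 0) (hd : ∀ k < N, d k ≠ 0)
    (hx : ∀ k < N, d k * x (k + 1) = c * e k * x k)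
    (hy : ∀ k < N, d k * y (k + 1) = e k * y k) :
    ∀ k ≤ N, x k = c ^ k * y k := by
  intro k
  induction k with
  | zero => simp [h0]
  | succ k ih =>
    intro hk
    refine mul_left_cancel₀ (hd k hk) ?_
    rw [hx k hk, ih (Nat.le_of_succ_le hk), mul_left_comm (d k), hy k hk, pow_succ]
    ac_rfl

section ZMod

variable {p : ℕ}

theorem ZMod.natCast_ne_zero_of_pos_of_lt {j : ℕ} (h0 : 0 < j) (hj : j < p) :
    (j : ZMod p) ≠ 0 := by
  rw [Ne, ZMod.natCast_eq_zero_iff]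
  exact Nat.not_dvd_of_pos_of_lt h0 hj

theorem ZMod.natCast_eq_neg_of_add_eq {a b : ℕ} (h : a + b = p) : (a : ZMod p) = -b := by
  rw [eq_neg_iff_add_eq_zero, ← Nat.cast_add, h, ZMod.natCast_self]

theorem ZMod.two_mul_div_two_add_one (hp : Odd p) : 2 * ((p / 2 : ℕ) : ZMod p) + 1 = 0 := by
  have h : ((2 * (p / 2) + 1 : ℕ) : ZMod p) = 0 := by
    rw [show 2 * (p / 2) + 1 = p by have := Nat.odd_iff.mp hp; omega, ZMod.natCast_self]
  exact_mod_cast h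

theorem ZMod.four_mul_div_four_add_one_mul (hp : Odd p) :
    (4 * ((p / 4 : ℕ) : ZMod p) + 1) * (4 * ((p / 4 : ℕ) : ZMod p) + 3) = 0 := by
  have h : (((4 * (p / 4) + 1) * (4 * (p / 4) + 3) : ℕ) : ZMod p) = 0 := by
    rw [ZMod.natCast_eq_zero_iff]
    rcases Nat.odd_mod_four_iff.mp (Nat.odd_iff.mp hp) with h | h
    · rw [show 4 * (p / 4) + 1 = p by omega]
      exact dvd_mul_right p _
    · rw [show 4 * (p / 4) + 3 = p by omega]
      exact dvd_mul_left p _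
  exact_mod_cast h

theorem ZMod.choose_div_four_recurrence (hp : Odd p) {k : ℕ} (hk : k < p / 4) :
    16 * ((k : ZMod p) + 1) ^ 2 *
        (((p / 4).choose (k + 1) : ZMod p) * ((p / 4 + (k + 1)).choose (p / 4) : ZMod p)) =
      -((4 * (k : ZMod p) + 1) * (4 * k + 3)) *
        (((p / 4).choose k : ZMod p) * ((p / 4 + k).choose (p / 4) : ZMod p)) := by
  set n := p / 4
  have h1 := congrArg (Nat.cast : ℕ → ZMod p) (Nat.choose_succ_right_eq n k)
  have h2 := congrArg (Nat.cast : ℕ → ZMod p) (Nat.choose_mul_succ_eq (n + k) n)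
  rw [show n + k + 1 - n = k + 1 by omega] at h2
  push_cast [Nat.cast_sub hk.le] at h1 h2
  rw [← add_assoc]
  -- `16 (n - k)(n + k + 1) = (4n + 1)(4n + 3) - (4k + 1)(4k + 3)`
  linear_combination 16 * ((k : ZMod p) + 1) * ((n + k + 1).choose n : ZMod p) * h1
    - 16 * (n.choose k : ZMod p) * ((n : ZMod p) - k) * h2
    + (n.choose k : ZMod p) * ((n + k).choose n : ZMod p)
      * ZMod.four_mul_div_four_add_one_mul hp

variable [Fact p.Prime]

theorem ZMod.two_ne_zero_of_ne_two (hp : p ≠ 2) : (2 : ZMod p) ≠ 0 := by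
  exact_mod_cast ZMod.natCast_ne_zero_of_pos_of_lt (p := p) (j := 2) two_pos
    ((Fact.out : p.Prime).two_le.lt_of_ne' hp)

theorem ZMod.sixteen_mul_add_one_sq_ne_zero {k : ℕ} (hk : 4 * (k + 1) < p) :
    16 * ((k : ZMod p) + 1) ^ 2 ≠ 0 := by
  rw [show 16 * ((k : ZMod p) + 1) ^ 2 = ((4 * (k + 1) : ℕ) : ZMod p) ^ 2 by push_cast; ring]
  exact pow_ne_zero 2 (ZMod.natCast_ne_zero_of_pos_of_lt (by omega) hk)

theorem ZMod.neg_two_pow_div_two (hp : p ≠ 2) : (-2 : ZMod p) ^ (p / 2) = (-1) ^ (p / 4) := by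
  have h := legendreSym.eq_pow p (-2)
  rw [legendreSym.at_neg_two hp, ZMod.χ₈'_nat_eq_if_mod_eight] at h
  have hmod := (Fact.out : p.Prime).mod_two_eq_one_iff_ne_two.mpr hp
  push_cast at h
  rw [neg_one_pow_eq_pow_mod_two, ← h, if_neg (by omega)]
  split_ifs with h8
  · rw [show p / 4 % 2 = 0 by omega, pow_zero]
  · rw [show p / 4 % 2 = 1 by omega, pow_one]

theorem ZMod.choose_pred_eq_neg_one_pow {k : ℕ} (hk : k ≤ p - 1) :
    ((p - 1).choose k : ZMod p) = (-1) ^ k := by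
  have hrec := eq_pow_mul_of_recurrence (x := fun k => ((p - 1).choose k : ZMod p))
    (y := fun _ => 1) (d := fun k => ((k + 1 : ℕ) : ZMod p))
    (e := fun k => ((k + 1 : ℕ) : ZMod p)) (c := -1) (N := p - 1) (by simp)
    (fun k hk => ZMod.natCast_ne_zero_of_pos_of_lt (by omega) (by omega)) (fun k hk => ?_)
    (fun k _ => rfl) k hk
  · simpa using hrec
  · have h := Nat.choose_succ_right_eq (p - 1) k
    rw [mul_comm, ← Nat.cast_mul, h, Nat.cast_mul,
      ZMod.natCast_eq_neg_of_add_eq (show p - 1 - k + (k + 1) = p by omega)]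
    ring

theorem ZMod.choose_div_two_recurrence (hp : p ≠ 2) {k : ℕ} (hk : k < p / 4) :
    16 * ((k : ZMod p) + 1) ^ 2 *
        (((p / 2).choose (2 * (k + 1)) : ZMod p) * ((p / 2).choose (k + 1) : ZMod p)) =
      -((4 * (k : ZMod p) + 1) * (4 * k + 3)) *
        (((p / 2).choose (2 * k) : ZMod p) * ((p / 2).choose k : ZMod p)) := by
  have hodd := (Fact.out : p.Prime).odd_of_ne_two hp
  have hmod := (Fact.out : p.Prime).mod_two_eq_one_iff_ne_two.mpr hp
  set m := p / 2
  have hk2 : 2 * k + 2 ≤ m := by omega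
  have h1 := congrArg (Nat.cast : ℕ → ZMod p)
    (Nat.succ_mul_add_two_mul_choose_add_two m (2 * k))
  have h2 := congrArg (Nat.cast : ℕ → ZMod p) (Nat.choose_succ_right_eq m k)
  push_cast [Nat.cast_sub (show 1 ≤ m - 2 * k by omega), Nat.cast_sub (show 2 * k ≤ m by omega),
    Nat.cast_sub (show k ≤ m by omega)] at h1 h2
  have h2k : 2 * (k : ZMod p) + 1 ≠ 0 := by
    exact_mod_cast ZMod.natCast_ne_zero_of_pos_of_lt (p := p) (j := 2 * k + 1) (by omega)
      (by omega)
  refine mul_left_cancel₀ h2k ?_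
  rw [show 2 * (k + 1) = 2 * k + 2 by ring]
  -- `8 (m - 2k)(m - 2k - 1)(m - k) + (2k + 1)(4k + 1)(4k + 3)` is a multiple of `2m + 1`
  linear_combination 8 * ((k : ZMod p) + 1) * (m.choose (k + 1) : ZMod p) * h1
    + 8 * ((m : ZMod p) - 2 * k) * (m - 2 * k - 1) * (m.choose (2 * k) : ZMod p) * h2
    + (m.choose (2 * k) : ZMod p) * (m.choose k : ZMod p)
      * ((2 * (m : ZMod p) + 1) ^ 2 - (10 * k + 5) * (2 * m + 1) + 32 * k ^ 2 + 32 * k + 7)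
      * ZMod.two_mul_div_two_add_one hodd

theorem ZMod.choose_four_mul_mul_choose_two_mul (hp : p ≠ 2) {k : ℕ} (hk : k ≤ p / 4) :
    ((4 * k).choose (2 * k) : ZMod p) * ((2 * k).choose k : ZMod p) =
      (-64) ^ k * (((p / 4).choose k : ZMod p) * ((p / 4 + k).choose (p / 4) : ZMod p)) := by
  have hodd := (Fact.out : p.Prime).odd_of_ne_two hp
  have hp4 : 4 * (p / 4) < p := by
    have := (Fact.out : p.Prime).mod_two_eq_one_iff_ne_two.mpr hp
    omega
  have hrec := eq_pow_mul_of_recurrence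
    (x := fun k => (((2 * k).centralBinom * k.centralBinom : ℕ) : ZMod p))
    (y := fun k => ((p / 4).choose k : ZMod p) * ((p / 4 + k).choose (p / 4) : ZMod p))
    (d := fun k => 16 * ((k : ZMod p) + 1) ^ 2)
    (e := fun k => -((4 * (k : ZMod p) + 1) * (4 * k + 3))) (c := -64) (N := p / 4) (by simp)
    (fun k hk => ZMod.sixteen_mul_add_one_sq_ne_zero (by omega)) (fun k _ => ?_)
    (fun k hk => ZMod.choose_div_four_recurrence hodd hk) k hk
  · simpa only [Nat.centralBinom_eq_two_mul_choose, ← mul_assoc, Nat.cast_mul,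
      show 2 * 2 = 4 from rfl] using hrec
  · have h := congrArg (Nat.cast : ℕ → ZMod p)
      (Nat.succ_sq_mul_centralBinom_two_mul_mul_centralBinom k)
    push_cast at h ⊢
    linear_combination 16 * h

theorem ZMod.choose_div_two_mul_choose_div_two (hp : p ≠ 2) {k : ℕ} (hk : k ≤ p / 4) :
    ((p / 2).choose (2 * k) : ZMod p) * ((p / 2).choose k : ZMod p) =
      ((p / 4).choose k : ZMod p) * ((p / 4 + k).choose (p / 4) : ZMod p) := by
  have hodd := (Fact.out : p.Prime).odd_of_ne_two hp
  have hp4 : 4 * (p / 4) < p := by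
    have := (Fact.out : p.Prime).mod_two_eq_one_iff_ne_two.mpr hp
    omega
  have hrec := eq_pow_mul_of_recurrence
    (x := fun k => ((p / 2).choose (2 * k) : ZMod p) * ((p / 2).choose k : ZMod p))
    (y := fun k => ((p / 4).choose k : ZMod p) * ((p / 4 + k).choose (p / 4) : ZMod p))
    (d := fun k => 16 * ((k : ZMod p) + 1) ^ 2)
    (e := fun k => -((4 * (k : ZMod p) + 1) * (4 * k + 3))) (c := 1) (N := p / 4) (by simp)
    (fun k hk => ZMod.sixteen_mul_add_one_sq_ne_zero (by omega))
    (fun k hk => (ZMod.choose_div_two_recurrence hp hk).trans (by ring))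
    (fun k hk => ZMod.choose_div_four_recurrence hodd hk) k hk
  simpa using hrec

theorem ZMod.choose_sub_two_mul_div_two (hp : p ≠ 2) {k : ℕ} (hk : 2 * k ≤ p / 2) :
    ((2 * (p / 2) - 2 * k).choose (p / 2) : ZMod p) =
      (-1) ^ (p / 2) * (p / 2).choose (2 * k) := by
  have hp2 : 2 * (p / 2) + 1 = p := by
    have := (Fact.out : p.Prime).mod_two_eq_one_iff_ne_two.mpr hp
    omega
  set m := p / 2
  have hrec := eq_pow_mul_of_recurrence
    (x := fun k => ((2 * m - 2 * k).choose m : ZMod p))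
    (y := fun k => (-1) ^ m * (m.choose (2 * k) : ZMod p))
    (d := fun k => ((2 * k + 1 : ℕ) : ZMod p) * ((2 * k + 2 : ℕ) : ZMod p))
    (e := fun k => ((m - 2 * k : ℕ) : ZMod p) * ((m - 2 * k - 1 : ℕ) : ZMod p)) (c := 1)
    (N := m / 2) ?_
    (fun k hk => mul_ne_zero (ZMod.natCast_ne_zero_of_pos_of_lt (by omega) (by omega))
      (ZMod.natCast_ne_zero_of_pos_of_lt (by omega) (by omega)))
    (fun k hk => ?_) (fun k _ => ?_) k (by omega)
  · simpa using hrec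
  · rw [mul_zero, Nat.sub_zero, show 2 * m = p - 1 by omega, ZMod.choose_pred_eq_neg_one_pow
      (by omega), Nat.choose_zero_right, Nat.cast_one, mul_one]
  · have h := congrArg (Nat.cast : ℕ → ZMod p)
      (Nat.succ_mul_add_two_mul_choose (2 * m - 2 * (k + 1)) m)
    rw [show 2 * m - 2 * (k + 1) + 1 - m = m - 2 * k - 1 by omega,
      show 2 * m - 2 * (k + 1) + 2 - m = m - 2 * k by omega,
      show 2 * m - 2 * (k + 1) + 2 = 2 * m - 2 * k by omega] at h
    push_cast [ZMod.natCast_eq_neg_of_add_eq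
      (show 2 * m - 2 * (k + 1) + 1 + (2 * k + 2) = p by omega),
      ZMod.natCast_eq_neg_of_add_eq (show 2 * m - 2 * k + (2 * k + 1) = p by omega)] at h ⊢
    linear_combination h
  · have h := congrArg (Nat.cast : ℕ → ZMod p)
      (Nat.succ_mul_add_two_mul_choose_add_two m (2 * k))
    push_cast at h ⊢
    rw [show 2 * (k + 1) = 2 * k + 2 by ring]
    linear_combination (-1 : ZMod p) ^ m * h

theorem ZMod.sum_pow_eq_neg_binomSum (hp : p ≠ 2) (t : ZMod p) :
    ∑ z : ZMod p, ((z + 1) * (t * z ^ 2 - 1)) ^ (p / 2) = -binomSum (p / 2) t := by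
  have hp3 : 3 ≤ p := (Fact.out : p.Prime).two_le.lt_of_ne' hp
  have hmod := (Fact.out : p.Prime).mod_two_eq_one_iff_ne_two.mpr hp
  have hdeg : (((X + 1) * (C t * X ^ 2 - 1)) ^ (p / 2)).natDegree <
      2 * (Fintype.card (ZMod p) - 1) := by
    refine (natDegree_pow_le_of_le _ (m := 3) (by compute_degree)).trans_lt ?_
    rw [ZMod.card]
    omega
  have h := Polynomial.sum_eval_eq_neg_coeff hdeg
  rw [ZMod.card, show p - 1 = 2 * (p / 2) by omega, coeff_pow_eq_binomSum] at h
  simpa using h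

theorem ZMod.sum_cubic_pow_eq (hp : 3 < p) (t : ZMod p) :
    ∑ x : ZMod p, (t * x ^ 3 - 3 * (t + 3) * x + 2 * (t - 9)) ^ (p / 2) =
      -(27 ^ (p / 2) * binomSum (p / 2) t) := by
  have h3 : (3 : ZMod p) ≠ 0 := by
    exact_mod_cast ZMod.natCast_ne_zero_of_pos_of_lt (p := p) (j := 3) (by omega) hp
  have hbij : Function.Bijective fun z : ZMod p => 3 * z + 1 :=
    (AddGroup.addRight_bijective 1).comp (mulLeft_bijective₀ 3 h3)
  rw [← Fintype.sum_bijective _ hbij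
    (fun z => 27 ^ (p / 2) * ((z + 1) * (t * z ^ 2 - 1)) ^ (p / 2)) _
    (fun z => by rw [← mul_pow]; ring_nf), ← mul_sum, ZMod.sum_pow_eq_neg_binomSum (by omega),
    mul_neg]

theorem ZMod.neg_mul_sum_cubic_pow_eq (hp : 3 < p) (t : ZMod p) :
    -(-6 * t) ^ (p / 2) * ∑ x : ZMod p, (t * x ^ 3 - 3 * (t + 3) * x + 2 * (t - 9)) ^ (p / 2) =
      (-1) ^ (p / 4) * t ^ (p / 2) * binomSum (p / 2) t := by
  have h3 : (3 : ZMod p) ≠ 0 := by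
    exact_mod_cast ZMod.natCast_ne_zero_of_pos_of_lt (p := p) (j := 3) (by omega) hp
  have h81 : (81 : ZMod p) ^ (p / 2) = 1 := by
    have hmod := (Fact.out : p.Prime).mod_two_eq_one_iff_ne_two.mpr (by omega)
    rw [show (81 : ZMod p) = 3 ^ 2 * 3 ^ 2 by norm_num, mul_pow, ← pow_mul,
      show 2 * (p / 2) = p - 1 by omega, ZMod.pow_card_sub_one_eq_one h3, one_mul]
  rw [ZMod.sum_cubic_pow_eq hp, neg_mul_neg, ← mul_assoc, ← mul_pow,
    show -6 * t * 27 = -2 * 81 * t by ring, mul_pow, mul_pow, h81,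
    ZMod.neg_two_pow_div_two (by omega), mul_one]

theorem ZMod.legP_div_four_eq_binomSum (hp : p ≠ 2) {t : ZMod p} (ht : t ≠ 0) :
    legP (p / 4) (2 / t - 1) = (-1) ^ (p / 4) * t ^ (p / 2) * binomSum (p / 2) t := by
  have hmod := (Fact.out : p.Prime).mod_two_eq_one_iff_ne_two.mpr hp
  rw [div_eq_mul_inv, legP_two_mul_sub_one_eq_neg_one_pow_mul
    (ZMod.two_ne_zero_of_ne_two hp).isUnit, mul_assoc]
  congr 1
  rw [binomSum, mul_sum, show p / 2 / 2 = p / 4 by omega]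
  refine sum_congr rfl fun k hk => ?_
  have hk : k ≤ p / 4 := Nat.lt_succ_iff.mp (mem_range.mp hk)
  have htk : t ^ (p / 2) * t ^ (p / 2 - k) = t⁻¹ ^ k := by
    rw [← pow_add, show p / 2 + (p / 2 - k) = (p - 1) - k by omega, pow_sub₀ _ ht (by omega),
      ZMod.pow_card_sub_one_eq_one ht, one_mul, inv_pow]
  rw [← ZMod.choose_div_two_mul_choose_div_two hp hk, neg_pow, ← htk]
  ring

theorem ZMod.legP_div_four_eq_sum_choose_four_mul (hp : p ≠ 2) {t : ZMod p} (ht : t ≠ 0) :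
    legP (p / 4) (2 / t - 1) = ∑ k ∈ range (p / 4 + 1),
      ((4 * k).choose (2 * k) : ZMod p) * ((2 * k).choose k : ZMod p) *
        ((t - 1) / (64 * t)) ^ k := by
  have h2 := ZMod.two_ne_zero_of_ne_two hp
  have h64 : (64 : ZMod p) ≠ 0 := by
    rw [show (64 : ZMod p) = 2 ^ 6 by norm_num]
    exact pow_ne_zero _ h2
  rw [div_eq_mul_inv, legP_two_mul_sub_one h2.isUnit]
  refine sum_congr rfl fun k hk => ?_
  have hbase : t⁻¹ - 1 = -64 * ((t - 1) / (64 * t)) := by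
    field_simp
    ring
  rw [ZMod.choose_four_mul_mul_choose_two_mul hp (Nat.lt_succ_iff.mp (mem_range.mp hk)), hbase,
    mul_pow]
  ring

theorem ZMod.legP_div_four_eq_neg_one_pow_mul_sum_choose_four_mul (hp : p ≠ 2) (t : ZMod p) :
    legP (p / 4) (2 / t - 1) = (-1) ^ (p / 4) * ∑ k ∈ range (p / 4 + 1),
      ((4 * k).choose (2 * k) : ZMod p) * ((2 * k).choose k : ZMod p) * (64 * t)⁻¹ ^ k := by
  have h2 := ZMod.two_ne_zero_of_ne_two hp
  have h64 : (64 : ZMod p) ≠ 0 := by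
    rw [show (64 : ZMod p) = 2 ^ 6 by norm_num]
    exact pow_ne_zero _ h2
  rw [div_eq_mul_inv, legP_two_mul_sub_one_eq_neg_one_pow_mul h2.isUnit]
  congr 1
  refine sum_congr rfl fun k hk => ?_
  have hbase : -t⁻¹ = -64 * (64 * t)⁻¹ := by
    rw [mul_inv, ← mul_assoc, neg_mul, mul_inv_cancel₀ h64, neg_one_mul]
  rw [ZMod.choose_four_mul_mul_choose_two_mul hp (Nat.lt_succ_iff.mp (mem_range.mp hk)), hbase,
    mul_pow]
  ring

theorem ZMod.pow_mul_legP_div_two (hp : p ≠ 2) (s : ZMod p) :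
    s ^ (p / 2) * legP (p / 2) s = (-1) ^ (p / 4) * binomSum (p / 2) (s ^ 2) := by
  have hinv : Ring.inverse (2 : ZMod p) ^ (p / 2) * (-1) ^ (p / 2) = (-1) ^ (p / 4) := by
    have hunit : (-2 : ZMod p) ^ (p / 2) * (-1) ^ (p / 4) = 1 := by
      rw [ZMod.neg_two_pow_div_two hp, ← pow_add, ← two_mul, pow_mul, neg_one_sq, one_pow]
    rw [Ring.inverse_eq_inv', eq_inv_of_mul_eq_one_right hunit, ← inv_pow, inv_neg,
      neg_pow (2 : ZMod p)⁻¹, mul_comm]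
  rw [legP, binomSum, ← hinv, mul_sum, mul_sum, mul_sum]
  refine sum_congr rfl fun k hk => ?_
  have hk : 2 * k ≤ p / 2 := by have := mem_range.mp hk; omega
  have hs : s ^ (p / 2) * s ^ (p / 2 - 2 * k) = (s ^ 2) ^ (p / 2 - k) := by
    rw [← pow_add, ← pow_mul]
    congr 1
    omega
  rw [ZMod.choose_sub_two_mul_div_two hp hk, ← hs]
  ring

end ZMod

theorem stmt_0 (p : ℕ) [Fact p.Prime] (hp : 3 < p) (t : ZMod p) (ht : t ≠ 0) :
    legP (p / 4) (2 / t - 1)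
        = ∑ k ∈ Finset.range (p / 4 + 1),
            (((4 * k).choose (2 * k) : ℕ) : ZMod p) * (((2 * k).choose k : ℕ) : ZMod p) *
              ((t - 1) / (64 * t)) ^ k
      ∧ legP (p / 4) (2 / t - 1)
        = (-1 : ZMod p) ^ (p / 4) * ∑ k ∈ Finset.range (p / 4 + 1),
            (((4 * k).choose (2 * k) : ℕ) : ZMod p) * (((2 * k).choose k : ℕ) : ZMod p) *
              ((64 * t)⁻¹) ^ k
      ∧ legP (p / 4) (2 / t - 1)
        = -(-6 * t) ^ ((p - 1) / 2) *
            ∑ x : ZMod p, (t * x ^ 3 - 3 * (t + 3) * x + 2 * (t - 9)) ^ ((p - 1) / 2)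
      ∧ ∀ s : ZMod p, s ^ 2 = t →
          legP (p / 4) (2 / t - 1) = s ^ ((p - 1) / 2) * legP ((p - 1) / 2) s := by
  have hp2 : p ≠ 2 := by omega
  have hmod := (Fact.out : p.Prime).mod_two_eq_one_iff_ne_two.mpr hp2
  rw [show (p - 1) / 2 = p / 2 by omega]
  refine ⟨ZMod.legP_div_four_eq_sum_choose_four_mul hp2 ht,
    ZMod.legP_div_four_eq_neg_one_pow_mul_sum_choose_four_mul hp2 t, ?_, fun s hs => ?_⟩
  · rw [ZMod.neg_mul_sum_cubic_pow_eq hp, ZMod.legP_div_four_eq_binomSum hp2 ht]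
  · subst hs
    have hs0 : s ≠ 0 := by
      rintro rfl
      simp at ht
    have hunit : (s ^ 2) ^ (p / 2) = 1 := by
      rw [← pow_mul, show 2 * (p / 2) = p - 1 by omega, ZMod.pow_card_sub_one_eq_one hs0]
    rw [ZMod.legP_div_four_eq_binomSum hp2 ht, ZMod.pow_mul_legP_div_two hp2, hunit, mul_one]
end

section
/- Let p > 3 be a prime and let t be any element of ℤ/pℤ. Then in ℤ/pℤ: P_{⌊p/4⌋}(t) = Σ_{k=0}^{⌊p/4⌋} C(4k,2k)·C(2k,k)·((1−t)/128)^k = −6^{(p−1)/2}·Σ_{x ∈ ℤ/pℤ} (x³ − (3/2)·(3t+5)·x + 9t + 7)^{(p−1)/2}. -/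
/-!
Write `n = ⌊p/4⌋`, `m = (p-1)/2` and `s = (1-t)/2`. Comparing Rodrigues' formulas for `(x²-1)ⁿ`
and `xⁿ(1-x)ⁿ` under `x ↦ 1-2x` gives `P_n(t) = ∑ (-1)ᵏ C(n,k) C(n+k,n) sᵏ` (the shifted Legendre
polynomial). Since `p ∈ {4n+1, 4n+3}`, `n` satisfies `16n(n+1) ≡ -3`, and a Pochhammer computation
turns `C(n,k) C(n+k,n) (-64)ᵏ` into `C(4k,2k) C(2k,k)` mod `p`.

For the character sum, `x = u + 2` turns the cubic into `u (u² + 6u + c)` with `c = 9(1-t)/2`.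
Summing a polynomial of degree `< 2(p-1)` over `𝔽_p` gives minus its coefficient of `x^(p-1)`,
here the middle coefficient `∑ C(m,2i) C(2i,i) 6^(m-2i) cⁱ` of `(u² + 6u + c)ᵐ`. As `m ≡ -1/2`,
`C(m,2i) 16ⁱ ≡ C(4i,2i)`, and Fermat's `6^(2m) = 1` finishes the computation.
-/

open Finset Polynomial Nat

/-- The integer polynomial `2 ^ n * P_n`. -/
noncomputable def legendreNumerator (n : ℕ) : ℤ[X] :=
  ∑ k ∈ range (n / 2 + 1),
    C ((-1) ^ k * n.choose k * (2 * n - 2 * k).choose n : ℤ) * X ^ (n - 2 * k)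

theorem legP_eq_inverse_two_pow_mul_aeval {R : Type*} [CommRing R] (n : ℕ) (x : R) :
    legP n x = Ring.inverse 2 ^ n * aeval x (legendreNumerator n) := by
  simp [legP, legendreNumerator, map_sum]

theorem iterate_derivative_X_sq_sub_one_pow (n : ℕ) :
    derivative^[n] ((X ^ 2 - 1 : ℤ[X]) ^ n) = n ! * legendreNumerator n := by
  have hexpand : (X ^ 2 - 1 : ℤ[X]) ^ n
      = ∑ k ∈ range (n + 1), C ((-1) ^ k * n.choose k : ℤ) * X ^ (2 * n - 2 * k) := by
    rw [sub_eq_add_neg, add_comm, add_pow]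
    refine sum_congr rfl fun k _ => ?_
    rw [← pow_mul, show 2 * n - 2 * k = 2 * (n - k) by omega]
    simp only [eq_intCast, Int.cast_mul, Int.cast_pow, Int.cast_neg, Int.cast_one, Int.cast_natCast]
    ring
  rw [hexpand, iterate_derivative_sum, legendreNumerator, mul_sum,
    ← sum_subset (range_subset_range.mpr (by omega : n / 2 + 1 ≤ n + 1))]
  · refine sum_congr rfl fun k _ => ?_
    rw [iterate_derivative_C_mul, iterate_derivative_X_pow_eq_C_mul,
      descFactorial_eq_factorial_mul_choose, show 2 * n - 2 * k - n = n - 2 * k by omega]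
    simp only [C_mul, Nat.cast_mul, map_natCast]
    ring
  · intro k hk hk'
    rw [iterate_derivative_C_mul, iterate_derivative_X_pow_eq_C_mul,
      descFactorial_eq_zero_iff_lt.mpr (by simp only [mem_range] at hk hk'; omega)]
    simp

theorem iterate_derivative_comp_C_mul_X_add_C {R : Type*} [CommSemiring R] (f : R[X]) (a b : R)
    (k : ℕ) :
    derivative^[k] (f.comp (C a * X + C b))
      = C a ^ k * (derivative^[k] f).comp (C a * X + C b) := by
  induction k generalizing f with
  | zero => simp
  | succ k ih => simp [ih, derivative_comp, pow_succ, mul_assoc, mul_left_comm]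

theorem legendreNumerator_comp_one_sub_two_mul_X (n : ℕ) :
    (legendreNumerator n).comp (C (-2) * X + C 1) = 2 ^ n * shiftedLegendre n := by
  have hcomp : ((X ^ 2 - 1 : ℤ[X]) ^ n).comp (C (-2) * X + C 1)
      = C ((-4) ^ n) * (X ^ n * (1 - X) ^ n) := by
    rw [pow_comp, ← mul_pow, C_pow, ← mul_pow]
    congr 1
    simp only [sub_comp, pow_comp, X_comp, one_comp, C_neg, map_ofNat, map_one]
    ring
  have h := iterate_derivative_comp_C_mul_X_add_C ((X ^ 2 - 1 : ℤ[X]) ^ n) (-2) 1 n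
  rw [hcomp, iterate_derivative_C_mul, ← factorial_mul_shiftedLegendre_eq,
    iterate_derivative_X_sq_sub_one_pow, natCast_mul_comp] at h
  simp only [map_pow, map_neg, map_ofNat] at h ⊢
  have h4 : (-4 : ℤ[X]) ^ n = (-2) ^ n * 2 ^ n := by rw [← mul_pow]; norm_num
  have hne : ((-2) ^ n * n ! : ℤ[X]) ≠ 0 := by simp [factorial_ne_zero]
  refine mul_left_cancel₀ hne ?_
  linear_combination -h + n ! * shiftedLegendre n * h4

theorem legP_one_sub_two_mul {R : Type*} [CommRing R] (h2 : IsUnit (2 : R)) (n : ℕ) (s : R) :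
    legP n (1 - 2 * s) = aeval s (shiftedLegendre n) := by
  have h := congrArg (aeval s) (legendreNumerator_comp_one_sub_two_mul_X n)
  simp only [aeval_comp, map_add, map_mul, map_neg, map_one, map_ofNat, aeval_X, map_pow] at h
  rw [legP_eq_inverse_two_pow_mul_aeval, show 1 - 2 * s = -2 * s + 1 by ring, h, ← mul_assoc,
    ← mul_pow, Ring.inverse_mul_cancel _ h2, one_pow, one_mul]

theorem aeval_shiftedLegendre {R : Type*} [CommRing R] (n : ℕ) (s : R) :
    aeval s (shiftedLegendre n)
      = ∑ k ∈ range (n + 1), (-1) ^ k * n.choose k * (n + k).choose n * s ^ k := by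
  simp [aeval_eq_sum_range, coeff_shiftedLegendre, zsmul_eq_mul]

theorem descPochhammer_eval_neg_half {R : Type*} [CommRing R] {a : R} (ha : 2 * a + 1 = 0)
    (j : ℕ) : (-4) ^ j * j ! * (descPochhammer R j).eval a = (2 * j) ! := by
  induction j with
  | zero => simp
  | succ j ih =>
    rw [descPochhammer_succ_eval, show 2 * (j + 1) = 2 * j + 1 + 1 by ring, factorial_succ,
      factorial_succ, factorial_succ]
    push_cast
    linear_combination -2 * (j + 1) * (-4) ^ j * j ! * (descPochhammer R j).eval a * ha
      + (2 * j + 2) * (2 * j + 1) * ih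

theorem descPochhammer_mul_ascPochhammer_eval_quarter {R : Type*} [CommRing R] {a : R}
    (ha : 16 * a * (a + 1) = -3) (k : ℕ) :
    (-64) ^ k * (2 * k) ! * (descPochhammer R k).eval a * (ascPochhammer R k).eval (a + 1)
      = (4 * k) ! := by
  induction k with
  | zero => simp
  | succ k ih =>
    rw [descPochhammer_succ_eval, ascPochhammer_succ_eval,
      show 2 * (k + 1) = 2 * k + 1 + 1 by ring, show 4 * (k + 1) = 4 * k + 1 + 1 + 1 + 1 by ring,
      factorial_succ, factorial_succ,
      factorial_succ, factorial_succ, factorial_succ, factorial_succ]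
    push_cast
    linear_combination -4 * (2 * k + 2) * (2 * k + 1) * ((-64) ^ k * (2 * k) ! *
        (descPochhammer R k).eval a * (ascPochhammer R k).eval (a + 1)) * ha
      + (4 * k + 4) * (4 * k + 3) * (4 * k + 2) * (4 * k + 1) * ih

theorem natCast_factorial_ne_zero {p : ℕ} [Fact p.Prime] {k : ℕ} (hk : k < p) :
    (k ! : ZMod p) ≠ 0 := by
  rw [Ne, ZMod.natCast_eq_zero_iff, (Fact.out : p.Prime).dvd_factorial]
  omega

theorem choose_half_pred_mul_neg_four_pow {p : ℕ} [Fact p.Prime] (hp : p ≠ 2) {j : ℕ}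
    (hj : j < p) : (((p - 1) / 2).choose j : ZMod p) * (-4) ^ j = (2 * j).choose j := by
  have hodd := Nat.odd_iff.mp ((Fact.out : p.Prime).odd_of_ne_two hp)
  have ha : 2 * (((p - 1) / 2 : ℕ) : ZMod p) + 1 = 0 := by
    have h : ((2 * ((p - 1) / 2) + 1 : ℕ) : ZMod p) = 0 := by
      rw [show 2 * ((p - 1) / 2) + 1 = p by omega, ZMod.natCast_self]
    exact_mod_cast h
  have h := descPochhammer_eval_neg_half ha j
  rw [descPochhammer_eval_eq_descFactorial, descFactorial_eq_factorial_mul_choose,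
    ← choose_mul_factorial_mul_factorial (show j ≤ 2 * j by omega),
    show 2 * j - j = j by omega] at h
  have hj! := natCast_factorial_ne_zero hj
  refine mul_left_cancel₀ (mul_ne_zero hj! hj!) ?_
  push_cast at h
  linear_combination h

theorem choose_mul_choose_add_mul_neg_sixtyfour_pow {p : ℕ} [Fact p.Prime] (hp : p ≠ 2) {k : ℕ}
    (hk : 2 * k < p) :
    ((p / 4).choose k * (p / 4 + k).choose (p / 4) : ZMod p) * (-64) ^ k
      = (4 * k).choose (2 * k) * (2 * k).choose k := by
  have hodd := Nat.odd_iff.mp ((Fact.out : p.Prime).odd_of_ne_two hp)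
  have ha : 16 * ((p / 4 : ℕ) : ZMod p) * ((p / 4 : ℕ) + 1) = -3 := by
    have h : (((4 * (p / 4) + 1) * (4 * (p / 4) + 3) : ℕ) : ZMod p) = 0 := by
      rw [ZMod.natCast_eq_zero_iff]
      rcases (by omega : p = 4 * (p / 4) + 1 ∨ p = 4 * (p / 4) + 3) with h | h
      · exact (dvd_of_eq h).mul_right _
      · exact (dvd_of_eq h).mul_left _
    push_cast at h
    linear_combination h
  have h := descPochhammer_mul_ascPochhammer_eval_quarter ha k
  rw [descPochhammer_eval_eq_descFactorial, descFactorial_eq_factorial_mul_choose,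
    ← Nat.cast_one, ← Nat.cast_add, ascPochhammer_nat_eq_natCast_ascFactorial,
    ascFactorial_eq_factorial_mul_choose, ← choose_symm_add,
    ← choose_mul_factorial_mul_factorial (show 2 * k ≤ 4 * k by omega),
    show 4 * k - 2 * k = 2 * k by omega] at h
  have hc : ((2 * k) ! : ZMod p) = (2 * k).choose k * k ! * k ! := by
    rw [← choose_mul_factorial_mul_factorial (show k ≤ 2 * k by omega), show 2 * k - k = k by omega]
    push_cast; ring
  have hk! := natCast_factorial_ne_zero (show k < p by omega)
  have h2k! := natCast_factorial_ne_zero hk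
  refine mul_left_cancel₀ (mul_ne_zero (mul_ne_zero hk! hk!) h2k!) ?_
  push_cast at h
  linear_combination h + ((4 * k).choose (2 * k) * (2 * k) ! : ZMod p) * hc

theorem coeff_C_mul_X_add_C_pow {R : Type*} [CommSemiring R] (b c : R) (n d : ℕ) :
    ((C b * X + C c) ^ n).coeff d = n.choose d * b ^ d * c ^ (n - d) := by
  have hterm : ∀ j, (C b * X) ^ j * C c ^ (n - j) * (n.choose j : R[X])
      = C (n.choose j * b ^ j * c ^ (n - j)) * X ^ j := by
    intro j
    simp only [map_mul, map_pow, map_natCast]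
    ring
  simp_rw [add_pow, finsetSum_coeff, hterm, coeff_C_mul_X_pow, sum_ite_eq, mem_range]
  split_ifs with h
  · rfl
  · rw [choose_eq_zero_of_lt (by omega), Nat.cast_zero, zero_mul, zero_mul]

theorem coeff_X_sq_add_C_mul_X_add_C_pow_self {R : Type*} [CommSemiring R] (b c : R) (m : ℕ) :
    ((X ^ 2 + C b * X + C c) ^ m).coeff m
      = ∑ i ∈ range (m / 2 + 1),
          (m.choose (2 * i) * (2 * i).choose i : R) * b ^ (m - 2 * i) * c ^ i := by
  rw [add_assoc, add_pow, finsetSum_coeff]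
  simp_rw [← pow_mul, coeff_mul_natCast, coeff_X_pow_mul']
  rw [← sum_subset (range_subset_range.mpr (by omega : m / 2 + 1 ≤ m + 1))]
  · refine sum_congr rfl fun i hi => ?_
    have hi : 2 * i ≤ m := by simp only [mem_range] at hi; omega
    rw [if_pos hi, coeff_C_mul_X_add_C_pow, show m - i - (m - 2 * i) = i by omega,
      show m - 2 * i = m - i - i by omega, choose_symm (by omega), ← Nat.cast_mul,
      choose_mul (n := m) (k := 2 * i) (s := i) (by omega), show 2 * i - i = i by omega]
    push_cast
    ring
  · intro i _ hi
    rw [if_neg (by simp only [mem_range] at hi; omega), zero_mul]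

namespace FiniteField

variable {K : Type*} [Field K] [Fintype K]

theorem sum_pow_eq_ite_of_lt_two_mul_s1 {i : ℕ} (hi : i < 2 * (Fintype.card K - 1)) :
    ∑ x : K, x ^ i = if i = Fintype.card K - 1 then -1 else 0 := by
  classical
  rcases lt_or_ge i (Fintype.card K - 1) with h | h
  · rw [sum_pow_lt_card_sub_one K i h, if_neg h.ne]
  have hi0 : i ≠ 0 := by have := Fintype.one_lt_card (α := K); omega
  have hunits : ∑ x : K, x ^ i = ∑ u : Kˣ, (u : K) ^ i := by
    rw [Fintype.sum_eq_add_sum_subtype_ne _ 0, zero_pow hi0, zero_add]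
    exact (Fintype.sum_equiv unitsEquivNeZero _ _ fun _ => rfl).symm
  have hdvd : Fintype.card K - 1 ∣ i ↔ i = Fintype.card K - 1 := by
    refine ⟨fun hd => ?_, fun h => h ▸ dvd_rfl⟩
    have := Nat.eq_zero_of_dvd_of_lt (Nat.dvd_sub hd dvd_rfl) (by omega)
    omega
  rw [hunits, sum_pow_units, if_congr hdvd rfl rfl]

theorem sum_eval_eq_neg_coeff_card_sub_one (f : K[X])
    (hf : f.natDegree < 2 * (Fintype.card K - 1)) :
    ∑ x : K, f.eval x = -f.coeff (Fintype.card K - 1) := by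
  have hK := Fintype.one_lt_card (α := K)
  simp_rw [eval_eq_sum_range' hf]
  rw [sum_comm]
  simp_rw [← mul_sum]
  rw [sum_congr rfl fun i hi => by rw [sum_pow_eq_ite_of_lt_two_mul_s1 (mem_range.mp hi)]]
  simp only [mul_ite, mul_neg, mul_one, mul_zero, sum_ite_eq', mem_range]
  rw [if_pos (by omega)]

theorem sum_cubic_pow_eq_neg_sum {m : ℕ} (hm : Fintype.card K = 2 * m + 1) (b c : K) :
    ∑ x : K, (x ^ 3 + b * x ^ 2 + c * x) ^ m
      = -∑ i ∈ range (m / 2 + 1),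
          (m.choose (2 * i) * (2 * i).choose i : K) * b ^ (m - 2 * i) * c ^ i := by
  have hm0 : 0 < m := by have := Fintype.one_lt_card (α := K); omega
  have heval : ∀ x : K,
      (x ^ 3 + b * x ^ 2 + c * x) ^ m = (X ^ m * (X ^ 2 + C b * X + C c) ^ m).eval x := by
    intro x
    simp only [eval_mul, eval_pow, eval_add, eval_X, eval_C]
    rw [← mul_pow]
    ring
  have hdeg : (X ^ m * (X ^ 2 + C b * X + C c) ^ m).natDegree < 2 * (Fintype.card K - 1) :=
    lt_of_le_of_lt (b := 3 * m) (by compute_degree!; omega) (by omega)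
  simp_rw [heval]
  rw [sum_eval_eq_neg_coeff_card_sub_one _ hdeg, hm, show 2 * m + 1 - 1 = m + m by omega,
    coeff_X_pow_mul, coeff_X_sq_add_C_mul_X_add_C_pow_self]

end FiniteField

theorem legP_div_four_eq_sum {p : ℕ} [Fact p.Prime] (hp : p ≠ 2) (t : ZMod p) :
    legP (p / 4) t = ∑ k ∈ range (p / 4 + 1),
      ((4 * k).choose (2 * k) * (2 * k).choose k : ZMod p) * ((1 - t) / 128) ^ k := by
  have h2 : (2 : ZMod p) ≠ 0 := Ring.two_ne_zero (by rwa [ZMod.ringChar_zmod_n])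
  have h128 : (128 : ZMod p) ≠ 0 := by
    rw [show (128 : ZMod p) = 2 ^ 7 by norm_num]
    exact pow_ne_zero 7 h2
  calc legP (p / 4) t = legP (p / 4) (1 - 2 * ((1 - t) / 2)) := by congr 1; field_simp; ring
    _ = _ := by rw [legP_one_sub_two_mul h2.isUnit, aeval_shiftedLegendre]
    _ = _ := sum_congr rfl fun k hk => ?_
  have hk : 2 * k < p := by
    have := (Fact.out : p.Prime).two_le
    simp only [mem_range] at hk
    omega
  rw [← choose_mul_choose_add_mul_neg_sixtyfour_pow hp hk, mul_assoc _ ((-64) ^ k), ← mul_pow,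
    show (-64) * ((1 - t) / 128) = -1 * ((1 - t) / 2) by field_simp; ring, mul_pow]
  ring

theorem neg_six_pow_mul_sum_cubic_eq_sum {p : ℕ} [Fact p.Prime] (hp : 3 < p) (t : ZMod p) :
    -(6 : ZMod p) ^ ((p - 1) / 2) *
        ∑ x : ZMod p, (x ^ 3 - 3 / 2 * (3 * t + 5) * x + 9 * t + 7) ^ ((p - 1) / 2)
      = ∑ k ∈ range (p / 4 + 1),
          ((4 * k).choose (2 * k) * (2 * k).choose k : ZMod p) * ((1 - t) / 128) ^ k := by
  have hp2 : p ≠ 2 := by omega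
  have hodd := Nat.odd_iff.mp ((Fact.out : p.Prime).odd_of_ne_two hp2)
  have h2 : (2 : ZMod p) ≠ 0 := Ring.two_ne_zero (by rwa [ZMod.ringChar_zmod_n])
  have h6 : (6 : ZMod p) ≠ 0 := by simpa [factorial] using natCast_factorial_ne_zero (k := 3) hp
  have h128 : (128 : ZMod p) ≠ 0 := by
    rw [show (128 : ZMod p) = 2 ^ 7 by norm_num]
    exact pow_ne_zero 7 h2
  set m := (p - 1) / 2
  have hshift : ∑ x : ZMod p, (x ^ 3 - 3 / 2 * (3 * t + 5) * x + 9 * t + 7) ^ m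
      = ∑ u : ZMod p, (u ^ 3 + 6 * u ^ 2 + 9 * (1 - t) / 2 * u) ^ m := by
    refine (Fintype.sum_equiv (Equiv.addRight 2) _ _ fun u => ?_).symm
    simp only [Equiv.coe_addRight]
    field_simp
    ring
  rw [hshift, FiniteField.sum_cubic_pow_eq_neg_sum (by rw [ZMod.card]; omega),
    show m / 2 = p / 4 by omega, mul_neg, neg_mul, neg_neg, mul_sum]
  refine sum_congr rfl fun i hi => ?_
  have hi : 2 * i ≤ m := by simp only [mem_range] at hi; omega
  rw [show 4 * i = 2 * (2 * i) by ring,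
    ← choose_half_pred_mul_neg_four_pow hp2 (j := 2 * i) (by omega),
    show 9 * (1 - t) / 2 = 6 ^ 2 * 16 * ((1 - t) / 128) by field_simp; ring]
  have hfermat : (6 : ZMod p) ^ m * 6 ^ (m - 2 * i) * (6 ^ 2) ^ i = 1 := by
    rw [← pow_mul, mul_assoc, ← pow_add, ← pow_add, show m + (m - 2 * i + 2 * i) = p - 1 by omega,
      ZMod.pow_card_sub_one_eq_one h6]
  rw [pow_mul, show (-4 : ZMod p) ^ 2 = 16 by norm_num, mul_pow, mul_pow]
  linear_combination (m.choose (2 * i) * (2 * i).choose i * 16 ^ i * ((1 - t) / 128) ^ i : ZMod p)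
    * hfermat

theorem stmt_1 (p : ℕ) [Fact p.Prime] (hp : 3 < p) (t : ZMod p) :
    legP (p / 4) t
        = ∑ k ∈ Finset.range (p / 4 + 1),
            (((4 * k).choose (2 * k) : ℕ) : ZMod p) * (((2 * k).choose k : ℕ) : ZMod p) *
              ((1 - t) / 128) ^ k
      ∧ legP (p / 4) t
        = -(6 : ZMod p) ^ ((p - 1) / 2) *
            ∑ x : ZMod p, (x ^ 3 - 3 / 2 * (3 * t + 5) * x + 9 * t + 7) ^ ((p - 1) / 2) := by
  have h := legP_div_four_eq_sum (by omega : p ≠ 2) t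
  exact ⟨h, h.trans (neg_six_pow_mul_sum_cubic_eq_sum hp t).symm⟩
end

section
/- Let p ≥ 17 be a prime and let t be any element of ℤ/pℤ. Let χ : ℤ/pℤ → ℤ be the quadratic character (χ(a) = 1 if a is a nonzero square, χ(a) = −1 if a is a nonsquare, χ(0) = 0). Then, as an equality of integers, Σ_{x ∈ ℤ/pℤ} χ(x³ − (3/2)·(3t+5)·x + 9t + 7) = χ(2) · Σ_{x ∈ ℤ/pℤ} χ(x³ + (3/2)·(3t−5)·x + 9t − 7). -/
/-!
The curve `y² = x (x² + a x + b)` is 2-isogenous to `y² = x (x² - 2a x + a² - 4b)`, so the two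
have the same number of points and hence the same character sum. Concretely, for `b ≠ 0` the map
`x ↦ (x + a + b/x, x - b/x)` is a bijection from `x ≠ 0` onto the conic `v² = (u - a)² - 4b`,
whose fibre over `u` has `χ((u - a)² - 4b) + 1` points. The cubic on the left of the theorem has
the root `2`, and an affine change of variables turns its isogenous partner into `8` times the
cubic on the right; `χ 8 = χ 2`.
-/

open Finset

lemma Fintype.sum_comp_mul_add {F M : Type*} [Field F] [Fintype F] [AddCommMonoid M] (f : F → M)
    {c : F} (hc : c ≠ 0) (d : F) : ∑ x, f (c * x + d) = ∑ x, f x :=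
  Fintype.sum_equiv ((Equiv.mulLeft₀ c hc).trans (Equiv.addRight d)) _ _ fun _ => rfl

section

variable {F : Type*} [Field F] [Fintype F] [DecidableEq F]

lemma sum_quadraticChar_sub_sq_mul (g : F → F) (c : F) :
    ∑ x, quadraticChar F ((x - c) ^ 2 * g x)
      = ∑ x, quadraticChar F (g x) - quadraticChar F (g c) := by
  have hterm : ∀ x, quadraticChar F ((x - c) ^ 2 * g x)
      = quadraticChar F (g x) - if x = c then quadraticChar F (g c) else 0 := by
    intro x
    by_cases hx : x = c
    · simp [hx]
    · rw [map_mul, quadraticChar_sq_one' (sub_ne_zero.mpr hx), one_mul, if_neg hx, sub_zero]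
  simp only [hterm, sum_sub_distrib, sum_ite_eq', mem_univ, if_true]

lemma sum_quadraticChar_eq_sum_ne_zero (a b : F) :
    ∑ x, quadraticChar F (x * (x ^ 2 + a * x + b))
      = ∑ x ∈ univ.filter (· ≠ 0), quadraticChar F (x + a + b / x) := by
  rw [sum_filter]
  refine sum_congr rfl fun x _ => ?_
  by_cases hx : x = 0
  · simp [hx]
  · rw [if_pos hx, show x * (x ^ 2 + a * x + b) = x ^ 2 * (x + a + b / x) by field_simp,
      map_mul, quadraticChar_sq_one' hx, one_mul]

lemma sum_ne_zero_eq_sum_conic {M : Type*} [AddCommMonoid M] (hF : ringChar F ≠ 2) (g : F → M)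
    (a : F) {b : F} (hb : b ≠ 0) :
    ∑ x ∈ univ.filter (· ≠ 0), g (x + a + b / x)
      = ∑ q ∈ univ.filter (fun q : F × F => q.2 ^ 2 = (q.1 - a) ^ 2 - 4 * b), g q.1 := by
  have h2 : (2 : F) ≠ 0 := Ring.two_ne_zero hF
  have hpreimage_ne_zero : ∀ q : F × F, q.2 ^ 2 = (q.1 - a) ^ 2 - 4 * b →
      (q.1 - a + q.2) / 2 ≠ 0 := by
    intro q hq h0
    have hsum : q.1 - a + q.2 = 0 := (div_eq_zero_iff.mp h0).resolve_right h2
    have h4b : (2 * 2) * b = 0 := by linear_combination hq + (q.1 - a - q.2) * hsum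
    exact hb ((mul_eq_zero.mp h4b).resolve_left (mul_ne_zero h2 h2))
  refine sum_nbij' (fun x => (x + a + b / x, x - b / x)) (fun q => (q.1 - a + q.2) / 2)
    ?_ ?_ ?_ ?_ fun _ _ => rfl
  · intro x hx
    have hx0 : x ≠ 0 := (mem_filter.mp hx).2
    simp only [mem_filter, mem_univ, true_and]
    field_simp
    ring
  · intro q hq
    simpa using hpreimage_ne_zero q (mem_filter.mp hq).2
  · intro x hx
    have hx0 : x ≠ 0 := (mem_filter.mp hx).2
    field_simp
    ring
  · intro q hq
    have hq' : q.2 ^ 2 = (q.1 - a) ^ 2 - 4 * b := (mem_filter.mp hq).2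
    have hx0 := hpreimage_ne_zero q hq'
    set x := (q.1 - a + q.2) / 2 with hx
    have hb_eq : b = x * (q.1 - a - x) := by
      rw [hx]; field_simp; linear_combination hq'
    refine Prod.ext ?_ ?_
    · rw [hb_eq, mul_div_cancel_left₀ _ hx0]; ring
    · rw [hb_eq, mul_div_cancel_left₀ _ hx0, hx]; field_simp; ring

lemma sum_conic_eq_sum_quadraticChar {R : Type*} [CommRing R] (hF : ringChar F ≠ 2) (f : F → F)
    (g : F → R) :
    ∑ q ∈ univ.filter (fun q : F × F => q.2 ^ 2 = f q.1), g q.1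
      = ∑ u, ((quadraticChar F (f u) : R) + 1) * g u := by
  rw [sum_filter, ← univ_product_univ, sum_product]
  refine sum_congr rfl fun u _ => ?_
  dsimp only
  rw [← sum_filter, sum_const, nsmul_eq_mul]
  congr 1
  have hcard := quadraticChar_card_sqrts hF (f u)
  rw [Set.toFinset_ofPred] at hcard
  exact_mod_cast congrArg (Int.cast : ℤ → R) hcard

theorem sum_quadraticChar_isogenous (hF : ringChar F ≠ 2) (a b : F) :
    ∑ x, quadraticChar F (x * (x ^ 2 + a * x + b))
      = ∑ x, quadraticChar F (x * (x ^ 2 - 2 * a * x + (a ^ 2 - 4 * b))) := by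
  by_cases hb : b = 0
  · subst hb
    have hshift := Equiv.sum_comp (Equiv.addRight a) (fun x => quadraticChar F x)
    simp only [Equiv.coe_addRight, quadraticChar_sum_zero hF] at hshift
    calc ∑ x, quadraticChar F (x * (x ^ 2 + a * x + 0))
        = ∑ x, quadraticChar F ((x - 0) ^ 2 * (x + a)) :=
          sum_congr rfl fun x _ => by ring_nf
      _ = -quadraticChar F a := by
          rw [sum_quadraticChar_sub_sq_mul (· + a), hshift, zero_add, zero_sub]
      _ = ∑ x, quadraticChar F ((x - a) ^ 2 * x) := by
          rw [sum_quadraticChar_sub_sq_mul (fun x => x), quadraticChar_sum_zero hF, zero_sub]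
      _ = ∑ x, quadraticChar F (x * (x ^ 2 - 2 * a * x + (a ^ 2 - 4 * 0))) :=
          sum_congr rfl fun x _ => by ring_nf
  · rw [sum_quadraticChar_eq_sum_ne_zero, sum_ne_zero_eq_sum_conic hF _ a hb,
      sum_conic_eq_sum_quadraticChar hF (fun u => (u - a) ^ 2 - 4 * b)]
    have hexpand : ∀ u : F, (quadraticChar F ((u - a) ^ 2 - 4 * b) + 1) * quadraticChar F u
        = quadraticChar F (u * (u ^ 2 - 2 * a * u + (a ^ 2 - 4 * b))) + quadraticChar F u := by
      intro u
      rw [show u * (u ^ 2 - 2 * a * u + (a ^ 2 - 4 * b)) = ((u - a) ^ 2 - 4 * b) * u by ring,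
        map_mul]
      ring
    simp only [Int.cast_id, hexpand, sum_add_distrib, quadraticChar_sum_zero hF, add_zero]

end

theorem stmt_2 (p : ℕ) [Fact p.Prime] (hp : 17 ≤ p) (t : ZMod p) :
    ∑ x : ZMod p, quadraticChar (ZMod p) (x ^ 3 - 3 / 2 * (3 * t + 5) * x + 9 * t + 7)
      = quadraticChar (ZMod p) 2 *
          ∑ x : ZMod p, quadraticChar (ZMod p) (x ^ 3 + 3 / 2 * (3 * t - 5) * x + 9 * t - 7) := by
  have hF : ringChar (ZMod p) ≠ 2 := by rw [ZMod.ringChar_zmod_n]; omega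
  have h2 : (2 : ZMod p) ≠ 0 := Ring.two_ne_zero hF
  set χ := quadraticChar (ZMod p)
  have hleft : ∑ x, χ (x ^ 3 - 3 / 2 * (3 * t + 5) * x + 9 * t + 7)
      = ∑ x, χ (x * (x ^ 2 + 6 * x + (9 - 9 * t) / 2)) := by
    rw [← Fintype.sum_comp_mul_add (fun x => χ (x ^ 3 - 3 / 2 * (3 * t + 5) * x + 9 * t + 7))
      one_ne_zero 2]
    refine sum_congr rfl fun x _ => congrArg χ ?_
    field_simp
    ring
  have hright : ∑ x, χ (x * (x ^ 2 - 2 * 6 * x + (6 ^ 2 - 4 * ((9 - 9 * t) / 2))))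
      = χ 2 * ∑ x, χ (x ^ 3 + 3 / 2 * (3 * t - 5) * x + 9 * t - 7) := by
    rw [← Fintype.sum_comp_mul_add _ h2 4, mul_sum]
    refine sum_congr rfl fun x _ => ?_
    rw [show (2 * x + 4) * ((2 * x + 4) ^ 2 - 2 * 6 * (2 * x + 4) + (6 ^ 2 - 4 * ((9 - 9 * t) / 2)))
        = 2 * 2 ^ 2 * (x ^ 3 + 3 / 2 * (3 * t - 5) * x + 9 * t - 7) by field_simp; ring,
      map_mul, map_mul, quadraticChar_sq_one' h2, mul_one]
  rw [hleft, sum_quadraticChar_isogenous hF, hright]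
end

section
/- For all nonnegative integers m and n, the following identity of integers holds: Σ_{k=0}^{m} C(2k,k)²·C(n+k,2k)·C(k,m−k) = Σ_{k=0}^{m} C(2k,k)·C(n+k,2k)·C(2(m−k),m−k)·C(n+m−k,2(m−k)). -/
/-!
The sum `∑ₖ C(2k,k) C(n+k,2k) xᵏ` is the Legendre polynomial `fₙ(x) = Pₙ(1 + 2x)`, and both sides
of the identity are the coefficient of `xᵐ` in `fₙ(x)² = gₙ(x(1+x))`, where
`gₙ(y) = ∑ₖ C(2k,k)² C(n+k,2k) yᵏ`. This is proved by induction on `n`: squaring the recurrence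
`(n+2) fₙ₊₂ = (2n+3)(1+2x) fₙ₊₁ - (n+1) fₙ` and using `(1+2x)² = 1 + 4x(1+x)` expresses `fₙ₊₂²`
through `fₙ₊₁²`, `fₙ²` and the cross term `fₙ₊₁ fₙ`, which is carried along as
`(n+1) fₙ₊₁ fₙ = (1+2x) hₙ₊₁(x(1+x))`. The recurrences for `f`, `g` and `h` reduce, coefficient by
coefficient, to the ratios of `C(2k,k) C(n+k,2k)` under the shifts of `n` and `k`.
-/

open Finset Polynomial

lemma Nat.cast_choose_succ_mul {R : Type*} [CommRing R] (n k : ℕ) :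
    (n.choose (k + 1) : R) * (k + 1) = n.choose k * (n - k) := by
  rcases le_or_gt k n with hk | hk
  · have := congrArg (Nat.cast (R := R)) (Nat.choose_succ_right_eq n k)
    push_cast [hk] at this
    exact this
  · simp [Nat.choose_eq_zero_of_lt hk, Nat.choose_eq_zero_of_lt (hk.trans k.lt_succ_self)]

lemma Nat.cast_choose_mul_succ {R : Type*} [CommRing R] (n k : ℕ) :
    (n.choose k : R) * (n + 1) = (n + 1).choose k * (n + 1 - k) := by
  rcases le_or_gt k (n + 1) with hk | hk
  · have := congrArg (Nat.cast (R := R)) (Nat.choose_mul_succ_eq n k)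
    push_cast [hk] at this
    exact this
  · simp [Nat.choose_eq_zero_of_lt hk, Nat.choose_eq_zero_of_lt (n.lt_succ_self.trans hk)]

lemma Nat.cast_choose_two_mul_succ {K : Type*} [Field K] [CharZero K] (k : ℕ) :
    ((2 * (k + 1)).choose (k + 1) : K) = 2 * (2 * k + 1) / (k + 1) * (2 * k).choose k := by
  have := congrArg (Nat.cast (R := K)) (Nat.succ_mul_centralBinom_succ k)
  simp only [Nat.centralBinom_eq_two_mul_choose] at this
  push_cast at this
  field_simp
  linear_combination this

lemma Polynomial.coeff_sum_range_C_mul_X_pow {R : Type*} [Semiring R] {a : ℕ → R} {N : ℕ}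
    (ha : ∀ k, N ≤ k → a k = 0) (k : ℕ) :
    (∑ i ∈ range N, C (a i) * X ^ i).coeff k = a k := by
  simp only [finsetSum_coeff, coeff_C_mul_X_pow, sum_ite_eq, mem_range]
  split_ifs with hk
  · rfl
  · exact (ha k (not_lt.mp hk)).symm

lemma Polynomial.coeff_comp_X_mul_one_add_X {R : Type*} [CommSemiring R] (p : R[X]) (m : ℕ) :
    (p.comp (X * (1 + X))).coeff m = ∑ k ∈ range (m + 1), p.coeff k * k.choose (m - k) := by
  induction p using Polynomial.induction_on' with
  | add p q hp hq => simp only [add_comp, coeff_add, hp, hq, add_mul, sum_add_distrib]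
  | monomial j a =>
    rw [monomial_comp, coeff_C_mul, mul_pow, coeff_X_pow_mul', coeff_one_add_X_pow]
    simp only [coeff_monomial, ite_mul, zero_mul, sum_ite_eq, mem_range, Nat.lt_succ_iff]
    split_ifs <;> simp

namespace LegendreSquare

def legendreCoeff (n k : ℕ) : ℚ := ((2 * k).choose k : ℚ) * (n + k).choose (2 * k)

lemma legendreCoeff_zero_right (n : ℕ) : legendreCoeff n 0 = 1 := by
  simp [legendreCoeff]

lemma legendreCoeff_eq_zero_of_lt {n k : ℕ} (h : n < k) : legendreCoeff n k = 0 := by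
  simp [legendreCoeff, Nat.choose_eq_zero_of_lt (show n + k < 2 * k by omega)]

lemma legendreCoeff_succ_left_mul (m k : ℕ) :
    legendreCoeff (m + 1) k * (m + 1 - k) = (m + k + 1) * legendreCoeff m k := by
  have := Nat.cast_choose_mul_succ (R := ℚ) (m + k) (2 * k)
  simp only [legendreCoeff, show m + 1 + k = m + k + 1 by ring]
  push_cast at this ⊢
  linear_combination -((2 * k).choose k : ℚ) * this

lemma legendreCoeff_succ_right (m k : ℕ) :
    legendreCoeff m (k + 1) = (m + k + 1) * (m - k) / (k + 1) ^ 2 * legendreCoeff m k := by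
  have h₁ := Nat.cast_choose_succ_mul (R := ℚ) (m + k) (2 * k)
  have h₂ := congrArg (Nat.cast (R := ℚ)) (Nat.add_one_mul_choose_eq (m + k) (2 * k + 1))
  have hB := congrArg (Nat.cast (R := ℚ)) (Nat.succ_mul_centralBinom_succ k)
  simp only [Nat.centralBinom_eq_two_mul_choose] at hB
  rw [div_mul_eq_mul_div, eq_div_iff (by positivity)]
  simp only [legendreCoeff, show m + (k + 1) = m + k + 1 by ring,
    show 2 * (k + 1) = 2 * k + 1 + 1 by ring] at hB ⊢
  push_cast at h₁ h₂ hB ⊢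
  linear_combination (k + 1) * ((m + k + 1).choose (2 * k + 1 + 1) : ℚ) * hB
    - (2 * k + 1) * ((2 * k).choose k : ℚ) * h₂ + (m + k + 1) * ((2 * k).choose k : ℚ) * h₁

lemma legendreCoeff_succ_succ (m k : ℕ) :
    legendreCoeff (m + 1) (k + 1) =
      (m + k + 2) * (m + k + 1) / (k + 1) ^ 2 * legendreCoeff m k := by
  rw [legendreCoeff_succ_right]
  push_cast
  linear_combination (m + k + 2) / (k + 1) ^ 2 * legendreCoeff_succ_left_mul m k

lemma legendreCoeff_succ_right_of_succ_left (m k : ℕ) :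
    legendreCoeff m (k + 1) = (m + 1 - k) * (m - k) / (k + 1) ^ 2 * legendreCoeff (m + 1) k := by
  rw [legendreCoeff_succ_right]
  linear_combination -(m - k) / (k + 1) ^ 2 * legendreCoeff_succ_left_mul m k

/-- The Legendre polynomial `Pₙ(1 + 2X)`. -/
noncomputable def legendrePoly (n : ℕ) : ℚ[X] :=
  ∑ k ∈ range (n + 1), C (legendreCoeff n k) * X ^ k

def squareCoeff (n k : ℕ) : ℚ := (2 * k).choose k * legendreCoeff n k

noncomputable def squarePoly (n : ℕ) : ℚ[X] :=
  ∑ k ∈ range (n + 1), C (squareCoeff n k) * X ^ k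

def crossCoeff (n k : ℕ) : ℚ := (n - k) * squareCoeff n k

noncomputable def crossPoly (n : ℕ) : ℚ[X] :=
  ∑ k ∈ range (n + 1), C (crossCoeff n k) * X ^ k

@[simp]
lemma coeff_legendrePoly (n k : ℕ) : (legendrePoly n).coeff k = legendreCoeff n k :=
  coeff_sum_range_C_mul_X_pow (fun _ hk => legendreCoeff_eq_zero_of_lt hk) k

@[simp]
lemma coeff_squarePoly (n k : ℕ) : (squarePoly n).coeff k = squareCoeff n k :=
  coeff_sum_range_C_mul_X_pow
    (fun _ hk => by rw [squareCoeff, legendreCoeff_eq_zero_of_lt hk, mul_zero]) k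

@[simp]
lemma coeff_crossPoly (n k : ℕ) : (crossPoly n).coeff k = crossCoeff n k :=
  coeff_sum_range_C_mul_X_pow
    (fun _ hk => by rw [crossCoeff, squareCoeff, legendreCoeff_eq_zero_of_lt hk, mul_zero, mul_zero])
    k

lemma legendrePoly_zero : legendrePoly 0 = 1 := by
  simp [legendrePoly, legendreCoeff]

lemma legendrePoly_one : legendrePoly 1 = 1 + 2 * X := by
  simp [legendrePoly, legendreCoeff, sum_range_succ]

lemma squarePoly_zero : squarePoly 0 = 1 := by
  simp [squarePoly, squareCoeff, legendreCoeff]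

lemma squarePoly_one : squarePoly 1 = 1 + 4 * X := by
  norm_num [squarePoly, squareCoeff, legendreCoeff, sum_range_succ]

lemma crossPoly_one : crossPoly 1 = 1 := by
  simp [crossPoly, crossCoeff, squareCoeff, legendreCoeff, sum_range_succ]

lemma legendrePoly_add_two (n : ℕ) :
    C ((n : ℚ) + 2) * legendrePoly (n + 2) =
      C (2 * (n : ℚ) + 3) * ((1 + 2 * X) * legendrePoly (n + 1)) -
        C ((n : ℚ) + 1) * legendrePoly n := by
  ext k
  simp only [add_mul, one_mul, mul_assoc, coeff_add, coeff_sub, coeff_C_mul, coeff_ofNat_mul,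
    coeff_legendrePoly]
  rcases k with _ | k
  · simp only [coeff_X_mul_zero, legendreCoeff_zero_right]
    ring
  · rw [coeff_X_mul, coeff_legendrePoly, legendreCoeff_succ_succ (n + 1) k,
      legendreCoeff_succ_right (n + 1) k, legendreCoeff_succ_right_of_succ_left n k]
    push_cast
    field_simp
    ring

lemma crossPoly_add_two (n : ℕ) :
    crossPoly (n + 2) = C (2 * (n : ℚ) + 3) * squarePoly (n + 1) - crossPoly (n + 1) := by
  ext k
  simp only [coeff_sub, coeff_C_mul, coeff_crossPoly, coeff_squarePoly, crossCoeff, squareCoeff]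
  have := legendreCoeff_succ_left_mul (n + 1) k
  push_cast at this ⊢
  linear_combination ((2 * k).choose k : ℚ) * this

lemma squarePoly_add_two (n : ℕ) :
    C (((n : ℚ) + 2) ^ 2) * squarePoly (n + 2) +
        C (2 * (2 * (n : ℚ) + 3)) * ((1 + 4 * X) * crossPoly (n + 1)) =
      C ((2 * (n : ℚ) + 3) ^ 2) * ((1 + 4 * X) * squarePoly (n + 1)) +
        C (((n : ℚ) + 1) ^ 2) * squarePoly n := by
  ext k
  simp only [add_mul, one_mul, mul_assoc, coeff_add, coeff_C_mul, coeff_ofNat_mul,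
    coeff_squarePoly, coeff_crossPoly, crossCoeff, squareCoeff]
  rcases k with _ | k
  · simp only [coeff_X_mul_zero, legendreCoeff_zero_right]
    push_cast
    ring
  · rw [coeff_X_mul, coeff_X_mul, coeff_squarePoly, coeff_crossPoly, crossCoeff, squareCoeff,
      legendreCoeff_succ_succ (n + 1) k, legendreCoeff_succ_right (n + 1) k,
      legendreCoeff_succ_right_of_succ_left n k, Nat.cast_choose_two_mul_succ]
    push_cast
    field_simp
    ring

lemma legendrePoly_sq_and_cross (n : ℕ) :
    legendrePoly n ^ 2 = (squarePoly n).comp (X * (1 + X)) ∧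
      legendrePoly (n + 1) ^ 2 = (squarePoly (n + 1)).comp (X * (1 + X)) ∧
      C ((n : ℚ) + 1) * (legendrePoly (n + 1) * legendrePoly n) =
        (1 + 2 * X) * (crossPoly (n + 1)).comp (X * (1 + X)) := by
  induction n with
  | zero =>
    refine ⟨?_, ?_, ?_⟩
    · simp [legendrePoly_zero, squarePoly_zero]
    · rw [legendrePoly_one, squarePoly_one, add_comp, one_comp, mul_comp, ofNat_comp, X_comp]
      ring
    · simp [legendrePoly_zero, legendrePoly_one, crossPoly_one]
  | succ n ih =>
    obtain ⟨hsq₀, hsq₁, hcross⟩ := ih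
    have hf := legendrePoly_add_two n
    have hg := congrArg (·.comp (X * (1 + X))) (squarePoly_add_two n)
    have hh := congrArg (·.comp (X * (1 + X))) (crossPoly_add_two n)
    simp only [add_comp, sub_comp, mul_comp, C_comp, X_comp, one_comp, ofNat_comp] at hg hh
    simp only [map_add, map_mul, map_pow, map_natCast, map_ofNat, map_one, Nat.cast_ofNat]
      at hf hg hh hcross ⊢
    push_cast
    rw [show n + 1 + 1 = n + 2 from rfl]
    refine ⟨hsq₁, ?_, ?_⟩
    · have hne : ((n : ℚ[X]) + 2) ^ 2 ≠ 0 :=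
        pow_ne_zero 2 (by exact_mod_cast (n + 1).succ_ne_zero)
      apply mul_left_cancel₀ hne
      linear_combination
        ((n + 2) * legendrePoly (n + 2) + (2 * n + 3) * ((1 + 2 * X) * legendrePoly (n + 1))
            - (n + 1) * legendrePoly n) * hf
          + (2 * n + 3) ^ 2 * (1 + 2 * X) ^ 2 * hsq₁ + (n + 1) ^ 2 * hsq₀
          - 2 * (2 * n + 3) * (1 + 2 * X) * hcross - hg
    · linear_combination legendrePoly (n + 1) * hf + (2 * n + 3) * (1 + 2 * X) * hsq₁
        - hcross - (1 + 2 * X) * hh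

theorem legendrePoly_sq (n : ℕ) : legendrePoly n ^ 2 = (squarePoly n).comp (X * (1 + X)) :=
  (legendrePoly_sq_and_cross n).1

end LegendreSquare

open LegendreSquare

theorem stmt_10 (m n : ℕ) :
    ∑ k ∈ Finset.range (m + 1),
        (((2 * k).choose k : ℤ)) ^ 2 * ((n + k).choose (2 * k) : ℤ) * (k.choose (m - k) : ℤ)
      = ∑ k ∈ Finset.range (m + 1),
          ((2 * k).choose k : ℤ) * ((n + k).choose (2 * k) : ℤ) *
            ((2 * (m - k)).choose (m - k) : ℤ) * ((n + m - k).choose (2 * (m - k)) : ℤ) := by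
  have hcoeff := congrArg (coeff · m) (legendrePoly_sq n)
  simp only [sq, coeff_mul, Nat.sum_antidiagonal_eq_sum_range_succ_mk, coeff_legendrePoly,
    coeff_comp_X_mul_one_add_X, coeff_squarePoly] at hcoeff
  refine Int.cast_injective (α := ℚ) ?_
  push_cast
  convert hcoeff.symm using 1
  · refine sum_congr rfl fun k _ => ?_
    simp only [squareCoeff, legendreCoeff]
    ring
  · refine sum_congr rfl fun k hk => ?_
    rw [show n + m - k = n + (m - k) by have := mem_range.mp hk; omega]
    simp only [legendreCoeff]
    ring
end

section
/- For every nonnegative integer n, the identity P_n(x)² = Σ_{k=0}^{n} C(2k,k)²·C(n+k,2k)·((x²−1)/4)^k holds as an identity of polynomials in x with rational coefficients. -/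
open scoped Nat
open Finset Polynomial

def legendreCoeff (n k : ℕ) : ℕ := n.choose k * (2 * n - 2 * k).choose n

def legendreSqCoeff (n k : ℕ) : ℕ := (2 * k).choose k ^ 2 * (n + k).choose (2 * k)

lemma legendreCoeff_eq_zero {n k : ℕ} (h : n < 2 * k) : legendreCoeff n k = 0 := by
  rcases le_or_gt k n with hk | hk
  · simp [legendreCoeff, Nat.choose_eq_zero_of_lt (by omega : 2 * n - 2 * k < n)]
  · simp [legendreCoeff, Nat.choose_eq_zero_of_lt hk]

lemma legendreCoeff_zero_right (n : ℕ) : legendreCoeff n 0 = n.centralBinom := by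
  simp [legendreCoeff, Nat.centralBinom_eq_two_mul_choose]

lemma cast_legendreCoeff_add_two_mul (m k : ℕ) :
    (legendreCoeff (m + 2 * k) k : ℚ) = (2 * m + 2 * k)! / (k ! * (m + k)! * m !) := by
  rw [legendreCoeff, show 2 * (m + 2 * k) - 2 * k = (m + 2 * k) + m by omega, Nat.cast_mul,
    Nat.cast_add_choose, show m + 2 * k = k + (m + k) by ring, Nat.cast_add_choose,
    show k + (m + k) + m = 2 * m + 2 * k by ring]
  field_simp

lemma legendreCoeff_succ_left (n k : ℕ) :
    ((n : ℚ) + 1 - 2 * k) * legendreCoeff (n + 1) k =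
      2 * (2 * n + 1 - 2 * k) * legendreCoeff n k := by
  by_cases h : 2 * k ≤ n
  · obtain ⟨m, rfl⟩ : ∃ m, n = m + 2 * k := ⟨n - 2 * k, by omega⟩
    rw [show m + 2 * k + 1 = (m + 1) + 2 * k by ring, cast_legendreCoeff_add_two_mul,
      cast_legendreCoeff_add_two_mul]
    simp only [show 2 * (m + 1) + 2 * k = 2 * m + 2 * k + 1 + 1 by ring,
      show m + 1 + k = m + k + 1 by ring, Nat.factorial_succ]
    push_cast
    field_simp
    ring
  · rw [legendreCoeff_eq_zero (by omega : n < 2 * k), Nat.cast_zero, mul_zero]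
    rcases (by omega : n + 1 = 2 * k ∨ n + 1 < 2 * k) with h' | h'
    · rw [show (n : ℚ) + 1 - 2 * k = 0 by rw [sub_eq_zero]; exact_mod_cast h', zero_mul]
    · rw [legendreCoeff_eq_zero h', Nat.cast_zero, mul_zero]

lemma legendreCoeff_succ_right (n k : ℕ) :
    2 * ((k : ℚ) + 1) * (2 * n - 2 * k - 1) * legendreCoeff n (k + 1) =
      ((n : ℚ) - 2 * k) * (n - 2 * k - 1) * legendreCoeff n k := by
  by_cases h : 2 * k + 2 ≤ n
  · obtain ⟨m, rfl⟩ : ∃ m, n = m + 2 * (k + 1) := ⟨n - 2 * (k + 1), by omega⟩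
    rw [cast_legendreCoeff_add_two_mul, show m + 2 * (k + 1) = (m + 2) + 2 * k by ring,
      cast_legendreCoeff_add_two_mul]
    simp only [show 2 * (m + 2) + 2 * k = 2 * m + 2 * (k + 1) + 1 + 1 by ring,
      show m + 2 + k = m + (k + 1) + 1 by ring, Nat.factorial_succ]
    push_cast
    field_simp
    ring
  · rw [legendreCoeff_eq_zero (by omega : n < 2 * (k + 1)), Nat.cast_zero, mul_zero]
    rcases (by omega : n = 2 * k ∨ n = 2 * k + 1 ∨ n < 2 * k) with h' | h' | h'
    · simp [h']
    · simp [h']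
    · simp [legendreCoeff_eq_zero h']

lemma legendreCoeff_recurrence (n k : ℕ) :
    (n + 2) * legendreCoeff (n + 2) (k + 1) =
      2 * (2 * n + 3) * legendreCoeff (n + 1) (k + 1) + 4 * (n + 1) * legendreCoeff n k := by
  have r₁ := legendreCoeff_succ_left n k
  have r₂ := legendreCoeff_succ_left (n + 1) k
  have r₃ := legendreCoeff_succ_left (n + 1) (k + 1)
  have r₄ := legendreCoeff_succ_right (n + 2) k
  push_cast at r₁ r₂ r₃ r₄
  -- the ratio relations divide by these two factors, which are odd
  have h₁ : (2 * (n : ℚ) + 1 - 2 * k) ≠ 0 := by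
    exact_mod_cast (by omega : (2 * (n : ℤ) + 1 - 2 * k) ≠ 0)
  have h₃ : (2 * (n : ℚ) + 3 - 2 * k) ≠ 0 := by
    exact_mod_cast (by omega : (2 * (n : ℤ) + 3 - 2 * k) ≠ 0)
  qify
  refine mul_left_cancel₀ (mul_ne_zero h₁ h₃) ?_
  linear_combination (2 * (n : ℚ) + 3 - 2 * k) * (2 * n + 3) * r₃ + 2 * ((n : ℚ) + 1) *
    (2 * n + 3 - 2 * k) * r₁ + ((n : ℚ) + 1) * (n + 1 - 2 * k) * r₂ + ((n : ℚ) + 1) * r₄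

lemma legendreSqCoeff_eq_zero {n k : ℕ} (h : n < k) : legendreSqCoeff n k = 0 := by
  simp [legendreSqCoeff, Nat.choose_eq_zero_of_lt (by omega : n + k < 2 * k)]

lemma cast_legendreSqCoeff_add (m k : ℕ) :
    (legendreSqCoeff (m + k) k : ℚ) = (2 * k)! * (m + 2 * k)! / (k ! ^ 4 * m !) := by
  rw [legendreSqCoeff, Nat.cast_mul, Nat.cast_pow, show m + k + k = 2 * k + m by ring,
    Nat.cast_add_choose, Nat.cast_choose ℚ (by omega : k ≤ 2 * k),
    show 2 * k - k = k by omega, add_comm (2 * k) m]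
  field_simp

lemma legendreSqCoeff_succ_left (n k : ℕ) :
    ((n : ℚ) + 1 - k) * legendreSqCoeff (n + 1) k = (n + k + 1) * legendreSqCoeff n k := by
  by_cases h : k ≤ n
  · obtain ⟨m, rfl⟩ : ∃ m, n = m + k := ⟨n - k, by omega⟩
    rw [show m + k + 1 = (m + 1) + k by ring, cast_legendreSqCoeff_add, cast_legendreSqCoeff_add]
    simp only [show m + 1 + 2 * k = m + 2 * k + 1 by ring, Nat.factorial_succ]
    push_cast
    field_simp
    ring
  · rw [legendreSqCoeff_eq_zero (by omega : n < k), Nat.cast_zero, mul_zero]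
    rcases (by omega : n + 1 = k ∨ n + 1 < k) with h' | h'
    · rw [show (n : ℚ) + 1 - k = 0 by rw [sub_eq_zero]; exact_mod_cast h', zero_mul]
    · rw [legendreSqCoeff_eq_zero h', Nat.cast_zero, mul_zero]

lemma legendreSqCoeff_succ_right (n k : ℕ) :
    ((k : ℚ) + 1) ^ 3 * legendreSqCoeff n (k + 1) =
      2 * (2 * k + 1) * (n + k + 1) * (n - k) * legendreSqCoeff n k := by
  by_cases h : k + 1 ≤ n
  · obtain ⟨m, rfl⟩ : ∃ m, n = m + (k + 1) := ⟨n - (k + 1), by omega⟩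
    rw [cast_legendreSqCoeff_add, show m + (k + 1) = (m + 1) + k by ring,
      cast_legendreSqCoeff_add]
    simp only [show 2 * (k + 1) = 2 * k + 1 + 1 by ring,
      show m + (2 * k + 1 + 1) = m + 1 + 2 * k + 1 by ring, Nat.factorial_succ]
    push_cast
    field_simp
    ring
  · rw [legendreSqCoeff_eq_zero (by omega : n < k + 1), Nat.cast_zero, mul_zero]
    rcases (by omega : n = k ∨ n < k) with h' | h'
    · simp [h']
    · simp [legendreSqCoeff_eq_zero h']

-- Every coefficient is rewritten as a multiple of `legendreSqCoeff (n + 2) k`, dividing only by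
-- the positive factors of the ratio relations.
lemma legendreSqCoeff_recurrence (n k : ℕ) :
    ((n : ℚ) + 2) ^ 2 * legendreSqCoeff (n + 2) (k + 1) =
      (2 * n + 3) ^ 2 * (legendreSqCoeff (n + 1) (k + 1) + 4 * legendreSqCoeff (n + 1) k)
        - 2 * (2 * n + 3) * ((n + k + 2) * legendreSqCoeff n (k + 1)
          + 4 * (n + k + 1) * legendreSqCoeff n k)
        + (n + 1) ^ 2 * legendreSqCoeff n (k + 1) := by
  have s₁ := legendreSqCoeff_succ_left (n + 1) k
  have s₂ := legendreSqCoeff_succ_left n k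
  have s₃ := legendreSqCoeff_succ_left (n + 1) (k + 1)
  have s₄ := legendreSqCoeff_succ_left n (k + 1)
  have s₅ := legendreSqCoeff_succ_right (n + 2) k
  push_cast at s₁ s₂ s₃ s₄ s₅
  have e₁ : (legendreSqCoeff (n + 2) (k + 1) : ℚ) =
      2 * (2 * k + 1) * (n + k + 3) * (n + 2 - k) / (k + 1) ^ 3 * legendreSqCoeff (n + 2) k := by
    field_simp
    linear_combination s₅
  have e₂ : (legendreSqCoeff (n + 1) (k + 1) : ℚ) =
      (n + 1 - k) / (n + k + 3) * legendreSqCoeff (n + 2) (k + 1) := by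
    field_simp
    linear_combination -s₃
  have e₃ : (legendreSqCoeff (n + 1) k : ℚ) =
      (n + 2 - k) / (n + k + 2) * legendreSqCoeff (n + 2) k := by
    field_simp
    linear_combination -s₁
  have e₄ : (legendreSqCoeff n (k + 1) : ℚ) =
      (n - k) / (n + k + 2) * legendreSqCoeff (n + 1) (k + 1) := by
    field_simp
    linear_combination -s₄
  have e₅ : (legendreSqCoeff n k : ℚ) = (n + 1 - k) / (n + k + 1) * legendreSqCoeff (n + 1) k := by
    field_simp
    linear_combination -s₂
  rw [e₄, e₂, e₁, e₅, e₃]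
  field_simp
  ring

section LegendreSum

variable {R : Type*} [CommRing R]

def legendreSum (n : ℕ) (x : R) : R :=
  ∑ k ∈ range (n / 2 + 1), (-1) ^ k * (legendreCoeff n k : R) * x ^ (n - 2 * k)

lemma legP_eq_inverse_two_pow_mul (n : ℕ) (x : R) :
    legP n x = Ring.inverse 2 ^ n * legendreSum n x := by
  simp only [legP, legendreSum, legendreCoeff, Nat.cast_mul, mul_assoc]

lemma legendreSum_eq_sum_range {n N : ℕ} (h : n / 2 < N) (x : R) :
    legendreSum n x = ∑ k ∈ range N, (-1) ^ k * (legendreCoeff n k : R) * x ^ (n - 2 * k) :=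
  (eventually_constant_sum (fun k hk => by simp [legendreCoeff_eq_zero (by omega : n < 2 * k)])
    (by omega)).symm

lemma legendreCoeff_mul_pow_mul_self (n k : ℕ) (x : R) :
    (legendreCoeff n k : R) * x ^ (n - 2 * k) * x = legendreCoeff n k * x ^ (n + 1 - 2 * k) := by
  by_cases h : 2 * k ≤ n
  · rw [mul_assoc, ← pow_succ, show n - 2 * k + 1 = n + 1 - 2 * k by omega]
  · simp [legendreCoeff_eq_zero (by omega : n < 2 * k)]

lemma legendreSum_succ_succ (n : ℕ) (x : R) :
    (n + 2) * legendreSum (n + 2) x =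
      2 * (2 * n + 3) * x * legendreSum (n + 1) x - 4 * (n + 1) * legendreSum n x := by
  rw [legendreSum_eq_sum_range (N := n / 2 + 2) (by omega),
    legendreSum_eq_sum_range (n := n + 1) (N := n / 2 + 2) (by omega), legendreSum,
    sum_range_succ' _ (n / 2 + 1), sum_range_succ' _ (n / 2 + 1), mul_add, mul_add, mul_sum,
    mul_sum, mul_sum, add_sub_right_comm, ← sum_sub_distrib]
  congr 1
  · refine sum_congr rfl fun k _ => ?_
    have hc := congrArg (Nat.cast : ℕ → R) (legendreCoeff_recurrence n k)
    have hx := legendreCoeff_mul_pow_mul_self (n + 1) (k + 1) x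
    push_cast at hc
    rw [show n + 1 + 1 - 2 * (k + 1) = n - 2 * k by omega] at hx
    rw [show n + 2 - 2 * (k + 1) = n - 2 * k by omega]
    linear_combination (-1) ^ (k + 1) * x ^ (n - 2 * k) * hc - 2 * (2 * n + 3) * (-1) ^ (k + 1) * hx
  · have hc := congrArg (Nat.cast : ℕ → R) (Nat.succ_mul_centralBinom_succ (n + 1))
    push_cast at hc
    simp only [legendreCoeff_zero_right, pow_zero, mul_zero, Nat.sub_zero]
    linear_combination x ^ (n + 2) * hc

lemma legP_succ_succ (h2 : IsUnit (2 : R)) (n : ℕ) (x : R) :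
    (n + 2) * legP (n + 2) x = (2 * n + 3) * x * legP (n + 1) x - (n + 1) * legP n x := by
  have hu := Ring.mul_inverse_cancel _ h2
  simp only [legP_eq_inverse_two_pow_mul]
  linear_combination Ring.inverse (2 : R) ^ (n + 2) * legendreSum_succ_succ n x +
    ((2 * n + 3) * x * legendreSum (n + 1) x * Ring.inverse (2 : R) ^ (n + 1) -
      (n + 1) * legendreSum n x * Ring.inverse (2 : R) ^ n * (2 * Ring.inverse (2 : R) + 1)) * hu

end LegendreSum

-- `F_n` and `G_n` as polynomials in a variable standing for `w`.
noncomputable def legendreSqPoly (n : ℕ) : ℚ[X] :=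
  ∑ k ∈ range (n + 1), C (legendreSqCoeff n k : ℚ) * X ^ k

noncomputable def legendreCrossPoly (n : ℕ) : ℚ[X] :=
  ∑ k ∈ range (n + 1), C (((n : ℚ) + k + 1) * legendreSqCoeff n k) * X ^ k

lemma coeff_legendreSqPoly (n k : ℕ) : (legendreSqPoly n).coeff k = legendreSqCoeff n k := by
  simp only [legendreSqPoly, finsetSum_coeff, coeff_C_mul_X_pow, sum_ite_eq, mem_range]
  split_ifs with h
  · rfl
  · rw [legendreSqCoeff_eq_zero (by omega), Nat.cast_zero]

lemma coeff_legendreCrossPoly (n k : ℕ) :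
    (legendreCrossPoly n).coeff k = ((n : ℚ) + k + 1) * legendreSqCoeff n k := by
  simp only [legendreCrossPoly, finsetSum_coeff, coeff_C_mul_X_pow, sum_ite_eq, mem_range]
  split_ifs with h
  · rfl
  · rw [legendreSqCoeff_eq_zero (by omega), Nat.cast_zero, mul_zero]

lemma legendreCrossPoly_succ (n : ℕ) :
    legendreCrossPoly (n + 1) =
      C (2 * (n : ℚ) + 3) * legendreSqPoly (n + 1) - legendreCrossPoly n := by
  ext k
  simp only [coeff_legendreCrossPoly, coeff_sub, coeff_C_mul, coeff_legendreSqPoly]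
  push_cast
  linear_combination -legendreSqCoeff_succ_left n k

lemma legendreSqPoly_succ_succ (n : ℕ) :
    C (((n : ℚ) + 2) ^ 2) * legendreSqPoly (n + 2) =
      (1 + C 4 * X) * (C ((2 * (n : ℚ) + 3) ^ 2) * legendreSqPoly (n + 1)
        - C (2 * (2 * (n : ℚ) + 3)) * legendreCrossPoly n)
        + C (((n : ℚ) + 1) ^ 2) * legendreSqPoly n := by
  ext k
  rcases k with _ | k
  · simp only [coeff_add, coeff_C_mul, add_mul, one_mul, mul_assoc, coeff_X_mul_zero, mul_zero,
      add_zero, coeff_sub, coeff_legendreSqPoly, coeff_legendreCrossPoly]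
    simp [legendreSqCoeff]
    ring
  · simp only [coeff_add, coeff_C_mul, add_mul, one_mul, mul_assoc, coeff_X_mul, coeff_sub,
      coeff_legendreSqPoly, coeff_legendreCrossPoly]
    push_cast
    linear_combination legendreSqCoeff_recurrence n k

local notation "W" => ((X ^ 2 - 1) * C (4⁻¹ : ℚ) : ℚ[X])

lemma X_sq_eq_one_add_four_mul : (X ^ 2 : ℚ[X]) = 1 + 4 * W := by
  have h4 : (4 : ℚ[X]) * C 4⁻¹ = 1 := by rw [← map_ofNat C 4, ← C_mul]; norm_num
  linear_combination -(X ^ 2 - 1) * h4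

lemma isUnit_two_ratPolynomial : IsUnit (2 : ℚ[X]) := by
  rw [← map_ofNat C 2]
  exact isUnit_C.mpr (isUnit_of_invertible 2)

lemma legP_X_sq_and_mul (n : ℕ) :
    legP n (X : ℚ[X]) ^ 2 = (legendreSqPoly n).comp W ∧
      legP (n + 1) (X : ℚ[X]) ^ 2 = (legendreSqPoly (n + 1)).comp W ∧
      ((n : ℚ[X]) + 1) * (legP n X * legP (n + 1) X) = X * (legendreCrossPoly n).comp W := by
  induction n with
  | zero =>
    have hP₀ : legP 0 (X : ℚ[X]) = 1 := by simp [legP]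
    have hP₁ : legP 1 (X : ℚ[X]) = X := by
      simp [legP, Ring.inverse_mul_cancel_left _ _ isUnit_two_ratPolynomial]
    simp [hP₀, hP₁, legendreSqPoly, legendreCrossPoly, sum_range_succ, legendreSqCoeff]
    linear_combination X_sq_eq_one_add_four_mul
  | succ n ih =>
    obtain ⟨h₀, h₁, hcross⟩ := ih
    have hP := legP_succ_succ isUnit_two_ratPolynomial n (X : ℚ[X])
    have hF := congrArg (·.comp W) (legendreSqPoly_succ_succ n)
    have hG := congrArg (·.comp W) (legendreCrossPoly_succ n)
    simp only [add_comp, sub_comp, mul_comp, one_comp, X_comp, C_comp] at hF hG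
    simp only [map_add, map_mul, map_pow, map_natCast, map_ofNat, map_one] at hF hG
    rw [← X_sq_eq_one_add_four_mul] at hF
    rw [show n + 1 + 1 = n + 2 from rfl]
    refine ⟨h₁, ?_, ?_⟩
    · have hn : ((n : ℚ[X]) + 2) ^ 2 ≠ 0 :=
        pow_ne_zero _ (by exact_mod_cast (n + 1).succ_ne_zero)
      refine mul_left_cancel₀ hn ?_
      linear_combination ((n + 2) * legP (n + 2) X + (2 * n + 3) * X * legP (n + 1) X
        - (n + 1) * legP n (X : ℚ[X])) * hP + (2 * n + 3) ^ 2 * X ^ 2 * h₁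
        - 2 * (2 * n + 3) * X * hcross + (n + 1) ^ 2 * h₀ - hF
    · push_cast
      linear_combination legP (n + 1) X * hP + (2 * n + 3) * X * h₁ - hcross - X * hG

theorem stmt_11 (n : ℕ) :
    legP n (Polynomial.X : Polynomial ℚ) ^ 2
      = ∑ k ∈ Finset.range (n + 1),
          (((2 * k).choose k : ℕ) : Polynomial ℚ) ^ 2 * (((n + k).choose (2 * k) : ℕ) : Polynomial ℚ) *
            ((Polynomial.X ^ 2 - 1) * Polynomial.C (4⁻¹ : ℚ)) ^ k := by
  rw [(legP_X_sq_and_mul n).1, legendreSqPoly, Polynomial.sum_comp]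
  simp [legendreSqCoeff]
end

section
/- For every nonnegative integer m, the following identity of integers holds: Σ_{k=0}^{m} C(2k,k)²·C(4k,2k)·C(k,m−k)·(−64)^{m−k} = Σ_{k=0}^{m} C(2k,k)·C(4k,2k)·C(2(m−k),m−k)·C(4(m−k),2(m−k)). -/
/-!
Weighting by `x ^ m` and summing over `m`, the identity says `(∑ b k x^k)^2 = ∑ a k (x(1-64x))^k`
with `a k = C(2k,k)^2 C(4k,2k)` and `b k = C(2k,k) C(4k,2k)`, the coefficients of
`₃F₂(1/4,1/2,3/4;1,1;256x)` and `₂F₁(1/4,3/4;1;64x)`: this is Clausen's formula composed with a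
quadratic transformation. We prove it by creative telescoping instead. Zeilberger's algorithm
produces rational certificates showing that both sides satisfy the recurrence
`P₀(m) u(m) + P₁(m) u(m+1) + P₂(m) u(m+2) = 0` with leading coefficient `P₂(m) = -(m+2)^3 ≠ 0`,
and the two sides agree for `m = 0, 1`.
-/

open Finset Finset.Nat

section Recurrence

variable {R : Type*}

theorem Finset.Nat.sum_antidiagonal_sub_telescope [AddCommGroup R] (H : ℕ → ℕ → R) (m : ℕ) :
    ∑ p ∈ antidiagonal m, (H (p.1 + 1) p.2 - H p.1 (p.2 + 1)) = H (m + 1) 0 - H 0 (m + 1) := by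
  rw [sum_antidiagonal_eq_sum_range_succ (fun i j ↦ H (i + 1) j - H i (j + 1))]
  convert sum_range_sub (fun k ↦ H k (m + 1 - k)) (m + 1) using 1
  · refine sum_congr rfl fun k hk ↦ ?_
    have : k ≤ m := Nat.lt_succ_iff.mp (mem_range.mp hk)
    simp only [Nat.add_sub_add_right, Nat.sub_add_comm this]
  · simp

/-- A certificate `H k i` stands for Zeilberger's `G(m, k)` with `i = m + 1 - k`, so that no
truncated subtraction occurs. -/
theorem sum_antidiagonal_recurrence [CommRing R] {t H : ℕ → ℕ → R} {P₀ P₁ P₂ : ℕ → R}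
    (ht : ∀ k j, P₀ (k + j) * t k j + P₁ (k + j) * t k (j + 1) + P₂ (k + j) * t k (j + 2)
      = H (k + 1) j - H k (j + 1)) (m : ℕ) :
    P₀ m * ∑ p ∈ antidiagonal m, t p.1 p.2 + P₁ m * ∑ p ∈ antidiagonal (m + 1), t p.1 p.2
        + P₂ m * ∑ p ∈ antidiagonal (m + 2), t p.1 p.2
      = H (m + 1) 0 - H 0 (m + 1) + P₁ m * t (m + 1) 0 + P₂ m * (t (m + 2) 0 + t (m + 1) 1) := by
  have hsum : ∑ p ∈ antidiagonal m,
      (P₀ m * t p.1 p.2 + P₁ m * t p.1 (p.2 + 1) + P₂ m * t p.1 (p.2 + 2))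
        = H (m + 1) 0 - H 0 (m + 1) := by
    rw [← sum_antidiagonal_sub_telescope H m]
    refine sum_congr rfl fun p hp ↦ ?_
    rw [← mem_antidiagonal.mp hp, ht]
  rw [sum_antidiagonal_succ', sum_antidiagonal_succ' (n := m + 1), sum_antidiagonal_succ' (n := m),
    ← hsum, sum_add_distrib, sum_add_distrib, ← mul_sum, ← mul_sum, ← mul_sum]
  ring

theorem eq_of_recurrence [CommRing R] [IsDomain R] {P₀ P₁ P₂ u v : ℕ → R} (hP₂ : ∀ m, P₂ m ≠ 0)
    (hu : ∀ m, P₀ m * u m + P₁ m * u (m + 1) + P₂ m * u (m + 2) = 0)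
    (hv : ∀ m, P₀ m * v m + P₁ m * v (m + 1) + P₂ m * v (m + 2) = 0)
    (h₀ : u 0 = v 0) (h₁ : u 1 = v 1) (m : ℕ) : u m = v m := by
  induction m using Nat.twoStepInduction with
  | zero => exact h₀
  | one => exact h₁
  | more n ih₀ ih₁ =>
    apply mul_left_cancel₀ (hP₂ n)
    linear_combination hu n - hv n - P₀ n * ih₀ - P₁ n * ih₁

end Recurrence

namespace Nat

variable {K : Type*} [Field K] [CharZero K]

theorem cast_choose_eq_mul_choose_succ_left (n r : ℕ) :
    (n.choose r : K) = (n + 1 - r) / (n + 1) * (n + 1).choose r := by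
  rw [div_mul_eq_mul_div, eq_div_iff (Nat.cast_add_one_ne_zero _)]
  rcases le_or_gt r (n + 1) with h | h
  · have := congrArg (Nat.cast (R := K)) (Nat.choose_mul_succ_eq n r)
    push_cast [Nat.cast_sub h] at this
    linear_combination this
  · simp [Nat.choose_eq_zero_of_lt h, Nat.choose_eq_zero_of_lt (Nat.lt_of_succ_lt h)]

theorem cast_choose_eq_mul_choose_succ_succ (n r : ℕ) :
    (n.choose r : K) = (r + 1) / (n + 1) * (n + 1).choose (r + 1) := by
  rw [div_mul_eq_mul_div, eq_div_iff (Nat.cast_add_one_ne_zero _)]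
  have := congrArg (Nat.cast (R := K)) (Nat.add_one_mul_choose_eq n r)
  push_cast at this
  linear_combination this

theorem cast_choose_succ_right_eq_mul (n r : ℕ) :
    (n.choose (r + 1) : K) = (n - r) / (r + 1) * n.choose r := by
  rw [div_mul_eq_mul_div, eq_div_iff (Nat.cast_add_one_ne_zero _)]
  rcases le_or_gt r n with h | h
  · have := congrArg (Nat.cast (R := K)) (Nat.choose_succ_right_eq n r)
    push_cast [Nat.cast_sub h] at this
    linear_combination this
  · simp [Nat.choose_eq_zero_of_lt h, Nat.choose_eq_zero_of_lt (Nat.lt_succ_of_lt h)]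

theorem cast_centralBinom_succ (n : ℕ) :
    ((n + 1).centralBinom : K) = 2 * (2 * n + 1) / (n + 1) * n.centralBinom := by
  rw [div_mul_eq_mul_div, eq_div_iff (Nat.cast_add_one_ne_zero _)]
  exact_mod_cast (mul_comm _ _).trans (Nat.succ_mul_centralBinom_succ n)

end Nat

namespace ClausenSquare

def a (k : ℕ) : ℚ := (k.centralBinom : ℚ) ^ 2 * (2 * k).centralBinom

def b (k : ℕ) : ℚ := (k.centralBinom : ℚ) * (2 * k).centralBinom

theorem a_succ (k : ℕ) :
    a (k + 1) = 8 * (2 * k + 1) * (4 * k + 1) * (4 * k + 3) / (k + 1) ^ 3 * a k := by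
  rw [a, a, show 2 * (k + 1) = 2 * k + 1 + 1 by ring, Nat.cast_centralBinom_succ (2 * k + 1),
    Nat.cast_centralBinom_succ (2 * k), Nat.cast_centralBinom_succ k]
  push_cast
  field_simp
  ring

theorem b_succ (k : ℕ) :
    b (k + 1) = 4 * (4 * k + 1) * (4 * k + 3) / (k + 1) ^ 2 * b k := by
  rw [b, b, show 2 * (k + 1) = 2 * k + 1 + 1 by ring, Nat.cast_centralBinom_succ (2 * k + 1),
    Nat.cast_centralBinom_succ (2 * k), Nat.cast_centralBinom_succ k]
  push_cast
  field_simp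
  ring

def P₀ (m : ℕ) : ℚ := -1024 * (m + 1) * (2 * m + 1) * (2 * m + 3)

def P₁ (m : ℕ) : ℚ := 8 * (2 * m + 3) * (8 * m ^ 2 + 24 * m + 19)

def P₂ (m : ℕ) : ℚ := -(m + 2) ^ 3

def lhsTerm (k j : ℕ) : ℚ := a k * k.choose j * (-64) ^ j

def rhsTerm (k j : ℕ) : ℚ := b k * b j

def lhsCert (k i : ℕ) : ℚ :=
  64 * k ^ 2 * (i + 2) * (i - k) * (i + k + 1) * a k * (k + 2).choose (i + 2) * (-64) ^ i
    / ((k + 1) * (k + 2))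

def rhsCert (k i : ℕ) : ℚ :=
  -4 * k ^ 2 * ((i + 1) * (16 * i + 7) + k * (16 * i + 13)) * b k * b i / (i + 1) ^ 2

theorem rhsTerm_telescoping (k j : ℕ) :
    P₀ (k + j) * rhsTerm k j + P₁ (k + j) * rhsTerm k (j + 1) + P₂ (k + j) * rhsTerm k (j + 2)
      = rhsCert (k + 1) j - rhsCert k (j + 1) := by
  simp only [P₀, P₁, P₂, rhsTerm, rhsCert, b_succ]
  push_cast
  field_simp
  ring

theorem lhsTerm_telescoping (k j : ℕ) :
    P₀ (k + j) * lhsTerm k j + P₁ (k + j) * lhsTerm k (j + 1) + P₂ (k + j) * lhsTerm k (j + 2)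
      = lhsCert (k + 1) j - lhsCert k (j + 1) := by
  -- Every binomial coefficient is a multiple of `C(k+3, j+2)` with nonvanishing denominators,
  -- which makes the degenerate cases `k < j + 2` need no separate treatment.
  have h₀ : (k.choose j : ℚ) = (j + 1) * (j + 2) * (k + 1 - j) / ((k + 1) * (k + 2) * (k + 3))
      * (k + 3).choose (j + 2) := by
    rw [Nat.cast_choose_eq_mul_choose_succ_left k j,
      Nat.cast_choose_eq_mul_choose_succ_succ (k + 1) j,
      Nat.cast_choose_eq_mul_choose_succ_succ (k + 1 + 1) (j + 1)]
    push_cast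
    field_simp
    ring
  have h₁ : (k.choose (j + 1) : ℚ)
      = (j + 2) * (k + 1 - j) * (k - j) / ((k + 1) * (k + 2) * (k + 3))
        * (k + 3).choose (j + 2) := by
    rw [Nat.cast_choose_eq_mul_choose_succ_left k (j + 1),
      Nat.cast_choose_eq_mul_choose_succ_left (k + 1) (j + 1),
      Nat.cast_choose_eq_mul_choose_succ_succ (k + 1 + 1) (j + 1)]
    push_cast
    field_simp
    ring
  have h₂ : (k.choose (j + 2) : ℚ)
      = (k + 1 - j) * (k - j) * (k - j - 1) / ((k + 1) * (k + 2) * (k + 3))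
        * (k + 3).choose (j + 2) := by
    rw [Nat.cast_choose_eq_mul_choose_succ_left k (j + 2),
      Nat.cast_choose_eq_mul_choose_succ_left (k + 1) (j + 2),
      Nat.cast_choose_eq_mul_choose_succ_left (k + 1 + 1) (j + 2)]
    push_cast
    field_simp
    ring
  have h₃ : ((k + 2).choose (j + 1 + 2) : ℚ) = (k + 1 - j) * (k - j) / ((j + 3) * (k + 3))
      * (k + 3).choose (j + 2) := by
    rw [Nat.cast_choose_eq_mul_choose_succ_left (k + 2) (j + 1 + 2),
      show j + 1 + 2 = j + 2 + 1 from rfl, Nat.cast_choose_succ_right_eq_mul (k + 2 + 1) (j + 2)]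
    push_cast
    field_simp
    ring
  simp only [P₀, P₁, P₂, lhsTerm, lhsCert, a_succ, h₀, h₁, h₂, h₃]
  push_cast
  field_simp
  ring

theorem lhs_recurrence (m : ℕ) :
    P₀ m * ∑ p ∈ antidiagonal m, lhsTerm p.1 p.2
        + P₁ m * ∑ p ∈ antidiagonal (m + 1), lhsTerm p.1 p.2
        + P₂ m * ∑ p ∈ antidiagonal (m + 2), lhsTerm p.1 p.2 = 0 := by
  rw [sum_antidiagonal_recurrence lhsTerm_telescoping, show m + 2 = m + 1 + 1 from rfl]
  simp only [P₁, P₂, lhsCert, lhsTerm, a_succ (m + 1), zero_add, Nat.choose_zero_right,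
    Nat.choose_one_right, Nat.cast_choose_two]
  push_cast
  field_simp
  ring

theorem rhs_recurrence (m : ℕ) :
    P₀ m * ∑ p ∈ antidiagonal m, rhsTerm p.1 p.2
        + P₁ m * ∑ p ∈ antidiagonal (m + 1), rhsTerm p.1 p.2
        + P₂ m * ∑ p ∈ antidiagonal (m + 2), rhsTerm p.1 p.2 = 0 := by
  rw [sum_antidiagonal_recurrence rhsTerm_telescoping, show m + 2 = m + 1 + 1 from rfl]
  simp only [P₁, P₂, rhsCert, rhsTerm, b_succ (m + 1), b_succ 0]
  norm_num [b]
  field_simp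
  ring

theorem P₂_ne_zero (m : ℕ) : P₂ m ≠ 0 :=
  neg_ne_zero.mpr (by positivity)

end ClausenSquare

theorem stmt_16 (m : ℕ) :
    ∑ k ∈ Finset.range (m + 1),
        ((2 * k).choose k : ℤ) ^ 2 * ((4 * k).choose (2 * k) : ℤ) * (k.choose (m - k) : ℤ) *
          (-64 : ℤ) ^ (m - k)
      = ∑ k ∈ Finset.range (m + 1),
          ((2 * k).choose k : ℤ) * ((4 * k).choose (2 * k) : ℤ) *
            ((2 * (m - k)).choose (m - k) : ℤ) * ((4 * (m - k)).choose (2 * (m - k)) : ℤ) := by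
  open ClausenSquare in
  have key := eq_of_recurrence P₂_ne_zero lhs_recurrence rhs_recurrence
    (by simp [lhsTerm, rhsTerm, a, b])
    (by
      simp [sum_antidiagonal_succ, lhsTerm, rhsTerm, a, b]
      norm_num [Nat.centralBinom, Nat.choose])
    m
  rw [sum_antidiagonal_eq_sum_range_succ, sum_antidiagonal_eq_sum_range_succ] at key
  have four_mul (k : ℕ) : 4 * k = 2 * (2 * k) := by ring
  qify
  simpa only [ClausenSquare.lhsTerm, ClausenSquare.rhsTerm, ClausenSquare.a, ClausenSquare.b,
    Nat.centralBinom, four_mul, mul_assoc] using key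
end
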